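/- arXiv:math/0504001 — 5 statements merged into one kernel-verified Lean document; each statement's English description precedes it below -/
import Mathlib

section
/- Consider the Markov chain (W_n) on the natural numbers with transition probabilities P(j, j-1) = 1/4, P(j, j) = 5/8, P(j, j+1) = 1/8 for j ≥ 1, and P(0,0) = 3/4, P(0,1) = 1/4. There exists a constant c₁ > 0 such that for all natural numbers N, r, k with N > 9r, the probability that W_N > k given W_0 = r is at most exp(-c₁ · k). -/
/-- Transition kernel of the reflected random walk on ℕ:
from `j ≥ 1` move to `j-1` w.p. 1/4, stay w.p. 5/8, move to `j+1` w.p. 1/8;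
from `0` stay w.p. 3/4 and move to `1` w.p. 1/4. -/
noncomputable def trafficKernel : ℕ → ℕ → ℝ
  | 0, 0 => 3/4
  | 0, 1 => 1/4
  | 0, _ => 0
  | (j+1), i => if i = j then 1/4 else if i = j+1 then 5/8 else if i = j+2 then 1/8 else 0

/-- `nStepDist n r j` is the probability that the chain started at `r` is at `j` at time `n`. -/
noncomputable def nStepDist : ℕ → ℕ → ℕ → ℝ
  | 0, r, j => if j = r then 1 else 0
  | (n+1), r, j => ∑' i : ℕ, nStepDist n r i * trafficKernel i j

/-- `tailProb N r k = P(W_N > k | W_0 = r)`. -/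
noncomputable def tailProb (N r k : ℕ) : ℝ :=
  ∑' j : ℕ, if k < j then nStepDist N r j else 0

/-!
The tails `tailProb N r k` obey a linear recursion in `N` with nonnegative coefficients, so
they are dominated by any supersolution. The stationary tail `(2/3) 2⁻ᵏ` plus the tail
`freeWalkTail N (k + 1 - r)` of the unreflected walk (drift `-1/8`) is one. Once `N ≥ 9 r` the
drift has carried the walk from `r` to below `0`: an exponential Chebyshev bound with
`θ = 26/25` gives `freeWalkTail N (k + 1 - r) ≤ (25/26)^(k+1)`, enough for `k ≥ 3`, and a
second-moment (Cantelli) bound covers the remaining small `k`.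
-/

lemma trafficKernel_eq_zero_of_lt {i j : ℕ} (h : i + 1 < j) : trafficKernel i j = 0 := by
  rcases i with _ | i
  · obtain ⟨j, rfl⟩ : ∃ m, j = m + 2 := ⟨j - 2, by omega⟩
    rfl
  · simp only [trafficKernel]
    split_ifs <;> first | rfl | omega

lemma nStepDist_eq_zero_of_lt : ∀ {N r j : ℕ}, r + N < j → nStepDist N r j = 0
  | 0, r, j, h => if_neg (by omega)
  | N + 1, r, j, h => by
    refine (tsum_congr fun i => ?_).trans tsum_zero
    rcases le_or_gt i (r + N) with hi | hi
    · rw [trafficKernel_eq_zero_of_lt (by omega), mul_zero]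
    · rw [nStepDist_eq_zero_of_lt hi, zero_mul]

lemma support_nStepDist_subset (N r : ℕ) : Function.support (nStepDist N r) ⊆ Set.Iic (r + N) :=
  fun _ hj => not_lt.1 fun h => hj (nStepDist_eq_zero_of_lt h)

lemma summable_nStepDist_mul (N r : ℕ) (g : ℕ → ℝ) :
    Summable fun j => nStepDist N r j * g j :=
  summable_of_hasFiniteSupport <| (Set.finite_Iic _).subset <|
    (Function.support_mul_subset_left _ _).trans (support_nStepDist_subset N r)

noncomputable def transitionMean (g : ℕ → ℝ) (i : ℕ) : ℝ :=
  ∑' j, trafficKernel i j * g j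

lemma transitionMean_zero (g : ℕ → ℝ) : transitionMean g 0 = 3/4 * g 0 + 1/4 * g 1 := by
  rw [transitionMean, tsum_eq_sum (s := {0, 1})]
  · simp [trafficKernel]
  · intro j hj
    simp only [Finset.mem_insert, Finset.mem_singleton, not_or] at hj
    obtain ⟨j, rfl⟩ : ∃ m, j = m + 2 := ⟨j - 2, by omega⟩
    simp [trafficKernel]

lemma transitionMean_succ (g : ℕ → ℝ) (i : ℕ) :
    transitionMean g (i + 1) = 1/4 * g i + 5/8 * g (i + 1) + 1/8 * g (i + 2) := by
  rw [transitionMean, tsum_eq_sum (s := {i, i + 1, i + 2})]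
  · simp [trafficKernel, add_assoc]
  · intro j hj
    simp only [Finset.mem_insert, Finset.mem_singleton, not_or] at hj
    simp [trafficKernel, hj]

noncomputable def chainExpect (N r : ℕ) (g : ℕ → ℝ) : ℝ := ∑' j, nStepDist N r j * g j

lemma chainExpect_zero (r : ℕ) (g : ℕ → ℝ) : chainExpect 0 r g = g r := by
  simp [chainExpect, nStepDist]

lemma chainExpect_succ (N r : ℕ) (g : ℕ → ℝ) :
    chainExpect (N + 1) r g = chainExpect N r (transitionMean g) := by
  have hfin : Summable (Function.uncurry fun i j => nStepDist N r i * trafficKernel i j * g j) := by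
    refine summable_of_hasFiniteSupport (((Set.finite_Iic (r + N)).prod
      (Set.finite_Iic (r + N + 1))).subset fun ⟨i, j⟩ hij => ?_)
    simp only [Function.mem_support, Function.uncurry_apply_pair] at hij
    have hi : i ≤ r + N := not_lt.1 fun h => hij (by rw [nStepDist_eq_zero_of_lt h]; ring)
    have hj : j ≤ i + 1 := not_lt.1 fun h => hij (by rw [trafficKernel_eq_zero_of_lt h]; ring)
    exact ⟨hi, by simp only [Set.mem_Iic]; omega⟩
  simp only [chainExpect, transitionMean, nStepDist, ← tsum_mul_right, ← tsum_mul_left,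
    ← mul_assoc]
  exact hfin.tsum_comm

lemma chainExpect_add (N r : ℕ) (f g : ℕ → ℝ) :
    chainExpect N r (fun j => f j + g j) = chainExpect N r f + chainExpect N r g := by
  simp only [chainExpect, mul_add]
  exact (summable_nStepDist_mul N r f).tsum_add (summable_nStepDist_mul N r g)

lemma chainExpect_const_mul (N r : ℕ) (a : ℝ) (g : ℕ → ℝ) :
    chainExpect N r (fun j => a * g j) = a * chainExpect N r g := by
  simp only [chainExpect, mul_left_comm _ a, tsum_mul_left]

lemma chainExpect_one : ∀ N r : ℕ, chainExpect N r (fun _ => 1) = 1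
  | 0, r => chainExpect_zero r _
  | N + 1, r => by
    have : transitionMean (fun _ => 1) = fun _ => 1 := by
      funext i; cases i <;> norm_num [transitionMean_zero, transitionMean_succ]
    rw [chainExpect_succ, this, chainExpect_one]

lemma tailProb_eq_chainExpect (N r k : ℕ) :
    tailProb N r k = chainExpect N r (fun j => if k < j then 1 else 0) := by
  simp [tailProb, chainExpect, mul_ite]

/-- `freeWalkExpect M f = E f(S_M)` for the walk `S` on `ℤ` started at `0` with steps `+1, 0, -1`
of probabilities `1/8, 5/8, 1/4`: the chain without its reflection at `0`. -/
noncomputable def freeWalkExpect : ℕ → (ℤ → ℝ) → ℝ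
  | 0, f => f 0
  | M + 1, f => 1/8 * freeWalkExpect M (fun x => f (x + 1)) + 5/8 * freeWalkExpect M f
      + 1/4 * freeWalkExpect M (fun x => f (x - 1))

lemma freeWalkExpect_mono :
    ∀ (M : ℕ) {f g : ℤ → ℝ}, f ≤ g → freeWalkExpect M f ≤ freeWalkExpect M g
  | 0, _, _, h => h 0
  | M + 1, f, g, h => by
    have h₁ := freeWalkExpect_mono M fun x => h (x + 1)
    have h₂ := freeWalkExpect_mono M h
    have h₃ := freeWalkExpect_mono M fun x => h (x - 1)
    simp only [freeWalkExpect]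
    linarith

lemma freeWalkExpect_const (c : ℝ) : ∀ M : ℕ, freeWalkExpect M (fun _ => c) = c
  | 0 => rfl
  | M + 1 => by simp only [freeWalkExpect, freeWalkExpect_const c M]; ring

lemma freeWalkExpect_zpow {θ : ℝ} (hθ : θ ≠ 0) :
    ∀ (M : ℕ) (a : ℤ),
      freeWalkExpect M (fun x => θ ^ (x + a)) = (θ/8 + 5/8 + θ⁻¹/4) ^ M * θ ^ a
  | 0, a => by simp [freeWalkExpect]
  | M + 1, a => by
    simp only [freeWalkExpect, sub_eq_add_neg, add_assoc, freeWalkExpect_zpow hθ M]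
    simp only [zpow_add₀ hθ, zpow_neg_one, zpow_one]
    ring

lemma freeWalkExpect_sq (a : ℝ) :
    ∀ (M : ℕ) (c : ℝ),
      freeWalkExpect M (fun x => a * (x + c) ^ 2) = a * (23 * M / 64 + (c - M / 8) ^ 2)
  | 0, c => by simp [freeWalkExpect]
  | M + 1, c => by
    simp only [freeWalkExpect, Int.cast_add, Int.cast_one, sub_eq_add_neg, add_assoc,
      freeWalkExpect_sq a M]
    push_cast
    ring

noncomputable def freeWalkTail (M : ℕ) (z : ℤ) : ℝ :=
  freeWalkExpect M (fun x => if z ≤ x then 1 else 0)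

lemma freeWalkTail_nonneg (M : ℕ) (z : ℤ) : 0 ≤ freeWalkTail M z := by
  rw [← freeWalkExpect_const 0 M]
  exact freeWalkExpect_mono M fun x => by dsimp only; split_ifs <;> norm_num

lemma freeWalkTail_zero (z : ℤ) : freeWalkTail 0 z = if z ≤ 0 then 1 else 0 := rfl

lemma freeWalkTail_succ (M : ℕ) (z : ℤ) : freeWalkTail (M + 1) z
    = 1/8 * freeWalkTail M (z - 1) + 5/8 * freeWalkTail M z + 1/4 * freeWalkTail M (z + 1) := by
  simp only [freeWalkTail, freeWalkExpect, sub_le_iff_le_add, le_sub_iff_add_le]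

lemma freeWalkTail_le_zpow {θ : ℝ} (hθ : 1 ≤ θ) (M : ℕ) (z : ℤ) :
    freeWalkTail M z ≤ (θ/8 + 5/8 + θ⁻¹/4) ^ M * θ ^ (-z) := by
  rw [← freeWalkExpect_zpow (by positivity) M]
  refine freeWalkExpect_mono M fun x => ?_
  dsimp only
  split_ifs with h
  · exact one_le_zpow₀ hθ (by omega)
  · positivity

/-- Markov's inequality for `((x + c) / (t + V / t))²` with the optimal shift `c = M/8 + V/t`. -/
lemma freeWalkTail_le_cantelli (M : ℕ) (z : ℤ) (ht : 0 < (z : ℝ) + M / 8) :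
    freeWalkTail M z ≤ (23 * M / 64) / (23 * M / 64 + ((z : ℝ) + M / 8) ^ 2) := by
  set V : ℝ := 23 * M / 64
  set t : ℝ := z + M / 8 with ht_def
  have hV : 0 ≤ V := by positivity
  have hs : 0 < t + V / t := add_pos_of_pos_of_nonneg ht (div_nonneg hV ht.le)
  calc freeWalkTail M z
      ≤ freeWalkExpect M (fun x => (t + V / t)⁻¹ ^ 2 * (x + (M / 8 + V / t)) ^ 2) := by
        refine freeWalkExpect_mono M fun x => ?_
        dsimp only
        split_ifs with h
        · have hzx : (z : ℝ) ≤ x := Int.cast_le.2 h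
          rw [← mul_pow]
          refine one_le_pow₀ ?_
          rw [inv_mul_eq_div, one_le_div hs, ht_def]
          linarith
        · positivity
    _ = V / (V + t ^ 2) := by
        rw [freeWalkExpect_sq, add_sub_cancel_left]
        have : t ≠ 0 := ht.ne'
        field_simp
        ring

lemma tailProb_zero (r k : ℕ) : tailProb 0 r k = if k < r then 1 else 0 := by
  rw [tailProb_eq_chainExpect, chainExpect_zero]

lemma tailProb_succ_zero (N r : ℕ) :
    tailProb (N + 1) r 0 = 1/4 + 1/2 * tailProb N r 0 + 1/4 * tailProb N r 1 := by
  have hmean : transitionMean (fun j => if 0 < j then 1 else 0)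
      = fun i => 1/4 * 1 + 1/2 * (if 0 < i then 1 else 0) + 1/4 * (if 1 < i then 1 else 0) := by
    funext i
    rcases i with _ | _ | i <;> norm_num [transitionMean_zero, transitionMean_succ]
  rw [tailProb_eq_chainExpect, chainExpect_succ, hmean, chainExpect_add, chainExpect_add,
    chainExpect_const_mul, chainExpect_const_mul, chainExpect_const_mul, chainExpect_one,
    ← tailProb_eq_chainExpect, ← tailProb_eq_chainExpect, mul_one]

lemma tailProb_succ_succ (N r k : ℕ) : tailProb (N + 1) r (k + 1)
    = 1/8 * tailProb N r k + 5/8 * tailProb N r (k + 1) + 1/4 * tailProb N r (k + 2) := by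
  have hmean : transitionMean (fun j => if k + 1 < j then 1 else 0)
      = fun i => 1/8 * (if k < i then 1 else 0) + 5/8 * (if k + 1 < i then 1 else 0)
          + 1/4 * (if k + 2 < i then 1 else 0) := by
    funext i
    rcases i with _ | i
    · simp [transitionMean_zero]
    · simp only [transitionMean_succ]
      split_ifs <;> first | omega | norm_num
  rw [tailProb_eq_chainExpect, chainExpect_succ, hmean, chainExpect_add, chainExpect_add,
    chainExpect_const_mul, chainExpect_const_mul, chainExpect_const_mul,
    ← tailProb_eq_chainExpect, ← tailProb_eq_chainExpect, ← tailProb_eq_chainExpect]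

lemma tailProb_le_of_supersolution {r : ℕ} {U : ℕ → ℕ → ℝ}
    (h_init : ∀ k, tailProb 0 r k ≤ U 0 k)
    (h_zero : ∀ N, 1/4 + 1/2 * U N 0 + 1/4 * U N 1 ≤ U (N + 1) 0)
    (h_succ : ∀ N k, 1/8 * U N k + 5/8 * U N (k + 1) + 1/4 * U N (k + 2) ≤ U (N + 1) (k + 1)) :
    ∀ N k, tailProb N r k ≤ U N k
  | 0, k => h_init k
  | N + 1, 0 => by
    have := tailProb_le_of_supersolution h_init h_zero h_succ N
    rw [tailProb_succ_zero]
    linarith [this 0, this 1, h_zero N]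
  | N + 1, k + 1 => by
    have := tailProb_le_of_supersolution h_init h_zero h_succ N
    rw [tailProb_succ_succ]
    linarith [this k, this (k + 1), this (k + 2), h_succ N k]

lemma tailProb_le_one (N r k : ℕ) : tailProb N r k ≤ 1 :=
  tailProb_le_of_supersolution (U := fun _ _ => 1)
    (fun k => by rw [tailProb_zero]; split_ifs <;> norm_num)
    (fun _ => by norm_num) (fun _ _ => by norm_num) N k

/-- `(2/3) 2⁻ᵏ` is the tail of the stationary law `(1/3) (1, 1, 1/2, 1/4, …)`. -/
lemma tailProb_le_stationary_add_freeWalkTail (N r k : ℕ) :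
    tailProb N r k ≤ 2/3 * (1/2) ^ k + freeWalkTail N (k + 1 - r) := by
  refine tailProb_le_of_supersolution
    (U := fun N k => 2/3 * (1/2) ^ k + freeWalkTail N (k + 1 - r))
    (fun k => ?_) (fun N => ?_) (fun N k => ?_) N k
  · have : (0 : ℝ) ≤ 2/3 * (1/2) ^ k := by positivity
    rw [tailProb_zero, freeWalkTail_zero]
    split_ifs <;> first | omega | linarith
  · have h₁ := freeWalkTail_nonneg N (-r)
    have h₂ := freeWalkTail_nonneg N (1 - r)
    simp only [freeWalkTail_succ, Nat.cast_zero, Nat.cast_one]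
    ring_nf at h₁ h₂ ⊢
    linarith
  · refine le_of_eq ?_
    rw [freeWalkTail_succ]
    push_cast
    ring_nf

lemma freeWalkTail_le_of_nine_mul_le {N r : ℕ} (hN : 9 * r ≤ N) (k : ℕ) :
    freeWalkTail N (k + 1 - r) ≤ (25/26) ^ (k + 1) := by
  have hφ : (26/25 : ℝ) / 8 + 5/8 + (26/25)⁻¹ / 4 = 647/650 := by norm_num
  have hdrift : (647/650 : ℝ) ^ N * (26/25) ^ r ≤ 1 :=
    calc (647/650 : ℝ) ^ N * (26/25) ^ r
        ≤ (647/650) ^ (9 * r) * (26/25) ^ r :=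
          mul_le_mul_of_nonneg_right (pow_le_pow_of_le_one (by norm_num) (by norm_num) hN)
            (by positivity)
      _ = ((647/650) ^ 9 * (26/25)) ^ r := by rw [pow_mul, mul_pow]
      _ ≤ 1 := pow_le_one₀ (by norm_num) (by norm_num)
  calc freeWalkTail N (k + 1 - r)
      ≤ (647/650) ^ N * (26/25) ^ (-((k + 1 : ℕ) - r : ℤ)) := by
        rw [← hφ]; push_cast; exact freeWalkTail_le_zpow (by norm_num) N _
    _ = (647/650) ^ N * (26/25) ^ r * (25/26) ^ (k + 1) := by
        rw [neg_sub, zpow_sub₀ (by norm_num), zpow_natCast, zpow_natCast,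
          div_eq_mul_inv _ ((26/25 : ℝ) ^ (k + 1)), ← inv_pow, inv_div, mul_assoc]
    _ ≤ (25/26) ^ (k + 1) := mul_le_of_le_one_left (by positivity) hdrift

lemma freeWalkTail_three_sub_le {N r : ℕ} (hN : 9 * r ≤ N) :
    freeWalkTail N (3 - r) ≤ 3/4 := by
  have hr : (9 * r : ℝ) ≤ N := by exact_mod_cast hN
  have ht : (3 : ℝ) + N / 72 ≤ ((3 - r : ℤ) : ℝ) + N / 8 := by push_cast; linarith
  have hN0 : (0 : ℝ) ≤ N := N.cast_nonneg
  have ht0 : 0 < ((3 - r : ℤ) : ℝ) + N / 8 := by linarith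
  refine (freeWalkTail_le_cantelli N _ ht0).trans ?_
  rw [div_le_iff₀ (by positivity)]
  nlinarith [sq_nonneg ((N : ℝ) - 72), pow_le_pow_left₀ (by positivity) ht 2]

lemma tailProb_two_le {N r : ℕ} (hN : 9 * r ≤ N) : tailProb N r 2 ≤ 11/12 := by
  have h := tailProb_le_stationary_add_freeWalkTail N r 2
  have h' := freeWalkTail_three_sub_le hN
  norm_num at h h' ⊢
  linarith

lemma tailProb_one_le {N r : ℕ} (hN : 9 * r < N) : tailProb N r 1 ≤ 47/48 := by
  obtain ⟨M, rfl⟩ : ∃ M, N = M + 1 := ⟨N - 1, by omega⟩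
  rw [tailProb_succ_succ]
  linarith [tailProb_le_one M r 0, tailProb_le_one M r 1,
    tailProb_two_le (show 9 * r ≤ M by omega)]

lemma half_pow_add_pow_le {k : ℕ} (hk : 3 ≤ k) :
    2/3 * (1/2 : ℝ) ^ k + (25/26) ^ (k + 1) ≤ (99/100) ^ k := by
  induction k, hk using Nat.le_induction with
  | base => norm_num
  | succ k _ ih =>
    calc 2/3 * (1/2 : ℝ) ^ (k + 1) + (25/26) ^ (k + 1 + 1)
        ≤ 25/26 * (2/3 * (1/2) ^ k + (25/26) ^ (k + 1)) := by
          rw [pow_succ _ k, pow_succ _ (k + 1)]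
          nlinarith [pow_nonneg (show (0 : ℝ) ≤ 1/2 by norm_num) k]
      _ ≤ 25/26 * (99/100) ^ k := by gcongr
      _ ≤ (99/100) ^ (k + 1) := by
          rw [pow_succ]
          nlinarith [pow_nonneg (show (0 : ℝ) ≤ 99/100 by norm_num) k]

lemma tailProb_le_pow {N r : ℕ} (hN : 9 * r < N) (k : ℕ) : tailProb N r k ≤ (99/100) ^ k := by
  match k with
  | 0 => simpa using tailProb_le_one N r 0
  | 1 => linarith [tailProb_one_le hN]
  | 2 => linarith [tailProb_two_le hN.le]
  | k + 3 =>
    linarith [tailProb_le_stationary_add_freeWalkTail N r (k + 3),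
      freeWalkTail_le_of_nine_mul_le hN.le (k + 3), half_pow_add_pow_le (k := k + 3) (by omega)]

/-- There exists `c₁ > 0` such that for all `N > 9r` and all `k`,
`P(W_N > k | W_0 = r) ≤ exp (-c₁ k)`. -/
theorem markov_tail_bound :
    ∃ c₁ : ℝ, 0 < c₁ ∧ ∀ N r k : ℕ, 9 * r < N →
      tailProb N r k ≤ Real.exp (-c₁ * k) := by
  refine ⟨Real.log (100/99), Real.log_pos (by norm_num), fun N r k hN => ?_⟩
  have h : -Real.log (100/99) * k = k * Real.log (99/100) := by
    rw [← Real.log_inv, inv_div]; ring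
  rw [h, Real.exp_nat_mul, Real.exp_log (by norm_num)]
  exact tailProb_le_pow hN k
end

section
/- For the Markov chain on ℕ with P(j, j-1) = 1/4, P(j,j) = 5/8, P(j, j+1) = 1/8 for j ≥ 1 and P(0,0) = 3/4, P(0,1) = 1/4, started at W_0 = 0, for every n ≥ 0 and k ≥ 0 there is a constant c₃ > 0 (independent of n and k) such that P(W_n > k | W_0 = 0) ≤ exp(-c₃ · k). -/
lemma K_nonneg (i j : ℕ) : 0 ≤ trafficKernel i j := by
  rcases i with _ | m
  · rcases j with _ | _ | j <;> simp [trafficKernel] <;> norm_num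
  · rw [show trafficKernel (m+1) j = if j = m then 1/4 else if j = m+1 then 5/8 else if j = m+2 then 1/8 else 0 from rfl]
    split_ifs <;> norm_num

lemma rec0 (n r : ℕ) : nStepDist (n+1) r 0 =
    nStepDist n r 0 * (3/4) + nStepDist n r 1 * (1/4) := by
  rw [show nStepDist (n+1) r 0 = ∑' i, nStepDist n r i * trafficKernel i 0 from rfl]
  rw [tsum_eq_sum (s := {0, 1}) ?_]
  · rw [Finset.sum_insert (by norm_num), Finset.sum_singleton]
    norm_num [trafficKernel]
  · intro i hi
    rcases i with _ | (_ | m)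
    · simp at hi
    · simp at hi
    · simp [trafficKernel]

lemma rec1 (n r : ℕ) : nStepDist (n+1) r 1 =
    nStepDist n r 0 * (1/4) + nStepDist n r 1 * (5/8) + nStepDist n r 2 * (1/4) := by
  rw [show nStepDist (n+1) r 1 = ∑' i, nStepDist n r i * trafficKernel i 1 from rfl]
  rw [tsum_eq_sum (s := {0, 1, 2}) ?_]
  · rw [Finset.sum_insert (by norm_num), Finset.sum_insert (by norm_num), Finset.sum_singleton]
    norm_num [trafficKernel]
    ring
  · intro i hi
    rcases i with _ | (_ | (_ | m))
    · simp at hi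
    · simp at hi
    · simp at hi
    · simp [trafficKernel]

lemma rec2 (n r j : ℕ) : nStepDist (n+1) r (j+2) =
    nStepDist n r (j+1) * (1/8) + nStepDist n r (j+2) * (5/8) + nStepDist n r (j+3) * (1/4) := by
  rw [show nStepDist (n+1) r (j+2) = ∑' i, nStepDist n r i * trafficKernel i (j+2) from rfl]
  rw [tsum_eq_sum (s := {j+1, j+2, j+3}) ?_]
  · rw [Finset.sum_insert (by simp), Finset.sum_insert (by simp), Finset.sum_singleton]
    have h1 : trafficKernel (j+1) (j+2) = 1/8 := by
      rw [show trafficKernel (j+1) (j+2) = if j+2 = j then 1/4 else if j+2 = j+1 then 5/8 else if j+2 = j+2 then 1/8 else 0 from rfl]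
      simp
    have h2 : trafficKernel (j+2) (j+2) = 5/8 := by
      rw [show trafficKernel (j+2) (j+2) = if j+2 = j+1 then 1/4 else if j+2 = j+2 then 5/8 else if j+2 = j+3 then 1/8 else 0 from rfl]
      simp
    have h3 : trafficKernel (j+3) (j+2) = 1/4 := by
      rw [show trafficKernel (j+3) (j+2) = if j+2 = j+2 then 1/4 else if j+2 = j+3 then 5/8 else if j+2 = j+4 then 1/8 else 0 from rfl]
      simp
    rw [h1, h2, h3]; ring
  · intro i hi
    simp only [Finset.mem_insert, Finset.mem_singleton] at hi
    push_neg at hi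
    obtain ⟨hi1, hi2, hi3⟩ := hi
    rcases i with _ | m
    · simp [trafficKernel]
    · rw [show trafficKernel (m+1) (j+2) = if j+2 = m then 1/4 else if j+2 = m+1 then 5/8 else if j+2 = m+2 then 1/8 else 0 from rfl]
      have : ¬ (j+2 = m) := by omega
      have : ¬ (j+2 = m+1) := by omega
      have : ¬ (j+2 = m+2) := by omega
      split_ifs <;> simp_all

lemma chain_inv (n : ℕ) :
    Summable (nStepDist n 0) ∧ (∀ j, 0 ≤ nStepDist n 0 j) ∧
    (∑' j, nStepDist n 0 j) ≤ 1 ∧ nStepDist n 0 1 ≤ 2/5 ∧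
    (∀ j, nStepDist n 0 (j+2) ≤ (4/5) * (1/2)^(j+2)) := by
  induction n with
  | zero =>
    have hfun : nStepDist 0 0 = fun j => if j = 0 then (1:ℝ) else 0 := rfl
    refine ⟨?_, ?_, ?_, ?_, ?_⟩
    · rw [hfun]
      exact summable_of_ne_finset_zero (s := {0}) (by intro b hb; simp at hb ⊢; exact hb)
    · intro j; rw [hfun]; dsimp only; split_ifs <;> norm_num
    · rw [hfun, tsum_eq_single 0 (by intro b hb; simp [hb])]; norm_num
    · rw [hfun]; norm_num
    · intro j; rw [hfun]; norm_num
  | succ n ih =>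
    obtain ⟨hs, hnn, hm, h1, hg⟩ := ih
    set p := nStepDist n 0 with hp
    -- summability of the shifted/prepended comparison function
    have hs1 : Summable (fun j => p (j+1)) := (summable_nat_add_iff 1).mpr hs
    have hq : Summable (fun j => if j = 0 then (0:ℝ) else p (j-1)) := by
      apply (summable_nat_add_iff 1).mp
      simpa using hs
    have hB : Summable (fun j => (if j = 0 then (0:ℝ) else p (j-1)) + (p j + p (j+1))) :=
      hq.add (hs.add hs1)
    have hnn' : ∀ j, 0 ≤ nStepDist (n+1) 0 j := by
      intro j
      rcases j with _ | (_ | j)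
      · rw [rec0]; have := hnn 0; have := hnn 1; positivity
      · rw [rec1]; have := hnn 0; have := hnn 1; have := hnn 2; positivity
      · rw [rec2]; have := hnn (j+1); have := hnn (j+2); have := hnn (j+3); positivity
    have hs' : Summable (nStepDist (n+1) 0) := by
      apply Summable.of_nonneg_of_le hnn' ?_ hB
      intro j
      rcases j with _ | (_ | j)
      · rw [rec0, ← hp]
        have := hnn 0; have := hnn 1
        norm_num
        linarith
      · rw [rec1, ← hp]
        have h0 := hnn 0; have h2 := hnn 2; have h3 := hnn 1
        norm_num
        linarith
      · rw [rec2, ← hp]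
        have h0 := hnn (j+1); have h2 := hnn (j+2); have h3 := hnn (j+3)
        norm_num
        linarith
    -- mass conservation
    have hmass : (∑' j, nStepDist (n+1) 0 j) = ∑' j, p j := by
      have hs'1 : Summable (fun j => nStepDist (n+1) 0 (j+1)) := (summable_nat_add_iff 1).mpr hs'
      have e0 : (∑' j, nStepDist (n+1) 0 j) = nStepDist (n+1) 0 0 + ∑' j, nStepDist (n+1) 0 (j+1) :=
        Summable.tsum_eq_zero_add hs'
      have e1 : (∑' j, nStepDist (n+1) 0 (j+1)) = nStepDist (n+1) 0 1 + ∑' j, nStepDist (n+1) 0 (j+2) :=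
        Summable.tsum_eq_zero_add hs'1
      have hsh : ∀ k : ℕ, Summable (fun j => p (j+k)) := fun k => (summable_nat_add_iff k).mpr hs
      have e2 : (∑' j, nStepDist (n+1) 0 (j+2)) =
          (∑' j, p (j+1)) * (1/8) + (∑' j, p (j+2)) * (5/8) + (∑' j, p (j+3)) * (1/4) := by
        calc (∑' j, nStepDist (n+1) 0 (j+2))
            = ∑' j, (p (j+1) * (1/8) + p (j+2) * (5/8) + p (j+3) * (1/4)) := by
              apply tsum_congr; intro j; exact rec2 n 0 j
          _ = (∑' j, p (j+1)) * (1/8) + (∑' j, p (j+2)) * (5/8) + (∑' j, p (j+3)) * (1/4) := by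
              rw [Summable.tsum_add (((hsh 1).mul_right _).add ((hsh 2).mul_right _)) ((hsh 3).mul_right _),
                  Summable.tsum_add ((hsh 1).mul_right _) ((hsh 2).mul_right _),
                  tsum_mul_right, tsum_mul_right, tsum_mul_right]
      have t1 : (∑ i ∈ Finset.range 1, p i) + ∑' j, p (j+1) = ∑' j, p j := Summable.sum_add_tsum_nat_add 1 hs
      have t2 : (∑ i ∈ Finset.range 2, p i) + ∑' j, p (j+2) = ∑' j, p j := Summable.sum_add_tsum_nat_add 2 hs
      have t3 : (∑ i ∈ Finset.range 3, p i) + ∑' j, p (j+3) = ∑' j, p j := Summable.sum_add_tsum_nat_add 3 hs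
      simp [Finset.sum_range_succ] at t1 t2 t3
      rw [e0, e1, e2, rec0, rec1, ← hp]
      linarith
    have hm' : (∑' j, nStepDist (n+1) 0 j) ≤ 1 := by rw [hmass]; exact hm
    -- p0 + p1 + p2 ≤ 1
    have hp012 : p 0 + p 1 + p 2 ≤ 1 := by
      have : (∑ i ∈ Finset.range 3, p i) ≤ ∑' j, p j := by
        apply Summable.sum_le_tsum _ (fun b _ => hnn b) hs
      simp [Finset.sum_range_succ] at this
      linarith
    have h1' : nStepDist (n+1) 0 1 ≤ 2/5 := by rw [rec1, ← hp]; linarith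
    have hg' : ∀ j, nStepDist (n+1) 0 (j+2) ≤ (4/5) * (1/2)^(j+2) := by
      intro j
      rcases j with _ | j
      · rw [rec2, ← hp]
        have g0 := hg 0; have g1 := hg 1
        norm_num at g0 g1 ⊢
        linarith
      · rw [rec2, ← hp]
        have g0 := hg j; have g1 := hg (j+1); have g2 := hg (j+2)
        have hx : (0:ℝ) < (1/2)^(j+2) := by positivity
        have e1 : ((1:ℝ)/2)^(j+3) = (1/2)^(j+2) * (1/2) := by ring
        have e2 : ((1:ℝ)/2)^(j+4) = (1/2)^(j+2) * (1/4) := by ring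
        have e3 : (j+1) + 2 = j + 3 := by omega
        have e4 : (j+2) + 2 = j + 4 := by omega
        rw [e3] at g1; rw [e4] at g2
        rw [show (j+1)+2 = j+3 from rfl, show (j+1)+3 = j+4 from rfl, show (j+1)+1 = j+2 from rfl]
        rw [e1] at g1 ⊢
        rw [e2] at g2
        linarith
    exact ⟨hs', hnn', hm', h1', hg'⟩

/-- There is a constant `c₃ > 0`, independent of `n` and `k`, such that the chain
started at `0` satisfies `P(W_n > k | W_0 = 0) ≤ exp (-c₃ k)` for all `n, k`. -/
theorem markov_tail_bound_from_zero :
    ∃ c₃ : ℝ, 0 < c₃ ∧ ∀ n k : ℕ, tailProb n 0 k ≤ Real.exp (-c₃ * k) := by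
  refine ⟨Real.log 2, Real.log_pos (by norm_num), ?_⟩
  intro n k
  obtain ⟨hs, hnn, hm, h1, hg⟩ := chain_inv n
  have hexp : Real.exp (-Real.log 2 * (k:ℝ)) = (1/2:ℝ)^k := by
    rw [show -Real.log 2 * (k:ℝ) = (k:ℝ) * Real.log (1/2) by
      rw [show (1/2:ℝ) = 2⁻¹ by norm_num, Real.log_inv]; ring]
    rw [← Real.log_pow, Real.exp_log (by positivity)]
  rw [tailProb, hexp]
  have hites : Summable (fun j => if k < j then nStepDist n 0 j else 0) := by
    apply Summable.of_nonneg_of_le ?_ ?_ hs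
    · intro j; split_ifs; exacts [hnn j, le_refl 0]
    · intro j; split_ifs; exacts [le_refl _, hnn j]
  rcases Nat.eq_zero_or_pos k with hk | hk
  · subst hk
    have : (∑' j, if 0 < j then nStepDist n 0 j else 0) ≤ ∑' j, nStepDist n 0 j := by
      apply Summable.tsum_le_tsum ?_ hites hs
      intro j; split_ifs; exacts [le_refl _, hnn j]
    calc (∑' j, if 0 < j then nStepDist n 0 j else 0) ≤ ∑' j, nStepDist n 0 j := this
      _ ≤ 1 := hm
      _ = (1/2:ℝ)^(0:ℕ) := by norm_num
  · -- k ≥ 1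
    have hgeo : Summable (fun j : ℕ => if k < j then (4/5:ℝ) * (1/2)^j else 0) := by
      apply Summable.of_nonneg_of_le ?_ ?_ ((summable_geometric_of_lt_one (by norm_num) (by norm_num : (1/2:ℝ) < 1)).mul_left (4/5))
      · intro j; split_ifs <;> positivity
      · intro j; split_ifs with h
        · exact le_rfl
        · positivity
    have hpt : ∀ j, (if k < j then nStepDist n 0 j else 0) ≤ (if k < j then (4/5:ℝ) * (1/2)^j else 0) := by
      intro j
      split_ifs with h
      · obtain ⟨m, rfl⟩ : ∃ m, j = m + 2 := ⟨j - 2, by omega⟩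
        exact hg m
      · exact le_rfl
    have hval : (∑' j : ℕ, if k < j then (4/5:ℝ) * (1/2)^j else 0) = (4/5) * (1/2)^k := by
      have hsplit := Summable.sum_add_tsum_nat_add (f := fun j : ℕ => if k < j then (4/5:ℝ) * (1/2)^j else 0) (k+1) hgeo
      have hzero : (∑ i ∈ Finset.range (k+1), if k < i then (4/5:ℝ) * (1/2)^i else 0) = 0 := by
        apply Finset.sum_eq_zero
        intro i hi
        rw [Finset.mem_range] at hi
        rw [if_neg (by omega)]
      have htail : (∑' i : ℕ, if k < i + (k+1) then (4/5:ℝ) * (1/2)^(i + (k+1)) else 0)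
          = (4/5) * (1/2)^k := by
        have : (fun i : ℕ => if k < i + (k+1) then (4/5:ℝ) * (1/2)^(i + (k+1)) else 0)
            = fun i : ℕ => ((4/5:ℝ) * (1/2)^(k+1)) * (1/2)^i := by
          funext i
          rw [if_pos (by omega), pow_add]
          ring
        rw [this, tsum_mul_left, tsum_geometric_of_lt_one (by norm_num) (by norm_num : (1/2:ℝ) < 1)]
        rw [pow_succ]
        ring
      rw [hzero, htail] at hsplit
      linarith
    calc (∑' j, if k < j then nStepDist n 0 j else 0)
        ≤ ∑' j : ℕ, if k < j then (4/5:ℝ) * (1/2)^j else 0 := Summable.tsum_le_tsum hpt hites hgeo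
      _ = (4/5) * (1/2)^k := hval
      _ ≤ (1/2)^k := by
          have : (0:ℝ) ≤ (1/2:ℝ)^k := by positivity
          linarith
end

section
/- Consider oriented bond percolation on ℤ² with parameter q, where each edge from z to z+(1,0) or z+(0,1) is independently open with probability q. If the probability θ that there is an infinite open oriented path from the origin is positive, then for every r ≥ 1, the probability that there is an open oriented path from (0,0) to (r,r) is at least (θ/2)². -/
open MeasureTheory

def dirVec (d : Bool) : ℤ × ℤ := if d then (1, 0) else (0, 1)

abbrev EdgeConf := (ℤ × ℤ) × Bool → Bool

def OpenPathTo (ω : EdgeConf) (x y : ℤ × ℤ) : Prop :=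
  ∃ (n : ℕ) (f : ℕ → ℤ × ℤ), f 0 = x ∧ f n = y ∧
    ∀ m < n, ∃ d : Bool, ω (f m, d) = true ∧ f (m + 1) = f m + dirVec d

def InfOpenPath (ω : EdgeConf) (x : ℤ × ℤ) : Prop :=
  ∃ f : ℕ → ℤ × ℤ, f 0 = x ∧
    ∀ m : ℕ, ∃ d : Bool, ω (f m, d) = true ∧ f (m + 1) = f m + dirVec d

def IIDEdges (μ : Measure EdgeConf) (q : ℝ) : Prop :=
  ∀ (s : Finset ((ℤ × ℤ) × Bool)) (b : (ℤ × ℤ) × Bool → Bool),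
    μ {ω | ∀ e ∈ s, ω e = b e} =
      ENNReal.ofReal (∏ e ∈ s, if b e then q else 1 - q)

/-!
Let `A` be the event that the origin is joined to a point of the antidiagonal `x + y = 2r`
lying on or below the diagonal, and `B` the event that a point of the antidiagonal `x + y = 0`
lying on or below the diagonal is joined to `(r, r)`. An infinite path from the origin crosses
`x + y = 2r` on one side of the diagonal, so by the reflection in the diagonal `θ ≤ 2 P(A)`;
the rotation by `π` about `(r/2, r/2)` followed by that reflection shows `P(B) = P(A)`.
A path in `A` and a path in `B` swap their left-to-right order between the two antidiagonals,
so they meet and can be spliced into a path from the origin to `(r, r)`. Both events are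
increasing, so Harris-FKG gives `P(0 → (r, r)) ≥ P(A ∩ B) ≥ P(A) P(B) ≥ (θ / 2)²`.
-/

open Relation

section ReflTransGen

variable {α : Type*} {r : α → α → Prop} {f : ℕ → α}

theorem reflTransGen_of_forall_lt {a b : ℕ} (hab : a ≤ b)
    (h : ∀ m, a ≤ m → m < b → r (f m) (f (m + 1))) : ReflTransGen r (f a) (f b) := by
  induction b, hab using Nat.le_induction with
  | base => rfl
  | succ b hab ih => exact (ih fun m ha hm => h m ha (by omega)).tail (h b hab (by omega))

theorem reflTransGen_iff_exists_seq {x y : α} :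
    ReflTransGen r x y ↔
      ∃ (n : ℕ) (f : ℕ → α), f 0 = x ∧ f n = y ∧ ∀ m < n, r (f m) (f (m + 1)) := by
  refine ⟨fun h => ?_, fun ⟨n, f, hf0, hfn, hf⟩ => ?_⟩
  · induction h using ReflTransGen.head_induction_on with
    | refl => exact ⟨0, fun _ => y, rfl, rfl, by simp⟩
    | head hxz _ ih =>
      obtain ⟨n, f, hf0, hfn, hf⟩ := ih
      refine ⟨n + 1, fun | 0 => _ | m + 1 => f m, rfl, hfn, ?_⟩
      rintro (_ | m) hm
      · simpa [hf0] using hxz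
      · exact hf m (by omega)
  · subst hf0 hfn
    exact reflTransGen_of_forall_lt n.zero_le fun m _ hm => hf m hm

theorem reflTransGen_iff_of_equiv {β : Type*} {p : β → β → Prop} (e : α ≃ β)
    (h : ∀ a b, r a b ↔ p (e a) (e b)) {a b : α} :
    ReflTransGen r a b ↔ ReflTransGen p (e a) (e b) := by
  refine ⟨ReflTransGen.lift e (fun a b => (h a b).1) a b, fun hp => ?_⟩
  simpa [Function.onFun] using
    ReflTransGen.lift e.symm (fun a b hab => (h _ _).2 (by simpa using hab)) _ _ hp

end ReflTransGen

theorem Int.exists_eq_zero_of_le_add_one {d : ℕ → ℤ} {n : ℕ} (h0 : d 0 ≤ 0) (hn : 0 ≤ d n)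
    (hstep : ∀ m < n, d (m + 1) ≤ d m + 1) : ∃ m ≤ n, d m = 0 := by
  induction n with
  | zero => exact ⟨0, le_rfl, le_antisymm h0 hn⟩
  | succ n ih =>
    by_cases hn' : 0 ≤ d n
    · obtain ⟨m, hm, hdm⟩ := ih hn' fun m hm => hstep m (by omega)
      exact ⟨m, by omega, hdm⟩
    · exact ⟨n + 1, le_rfl, by have := hstep n (by omega); omega⟩

theorem measureReal_mul_measureReal_le_of_isUpperSet {α : Type*} [Fintype α] [DistribLattice α]
    [MeasurableSpace α] [MeasurableSingletonClass α] {ν : Measure α} [IsProbabilityMeasure ν]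
    (hν : ∀ a b, ν.real {a} * ν.real {b} ≤ ν.real {a ⊓ b} * ν.real {a ⊔ b})
    {A B : Set α} (hA : IsUpperSet A) (hB : IsUpperSet B) :
    ν.real A * ν.real B ≤ ν.real (A ∩ B) := by
  have hsum : ∀ C : Set α, ν.real C = ∑ a, ν.real {a} * C.indicator 1 a := fun C => by
    rw [← integral_indicator_one (Set.toFinite C).measurableSet,
      integral_fintype Integrable.of_finite]
    simp
  have hmono : ∀ C : Set α, IsUpperSet C → Monotone (C.indicator (1 : α → ℝ)) :=
    fun C hC a b hab => by
      by_cases ha : a ∈ C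
      · simp [ha, hC hab ha]
      · simp [ha, Set.indicator_nonneg]
  have := fkg (A.indicator 1) (B.indicator 1) (fun a => ν.real {a}) (fun _ => measureReal_nonneg)
    (Set.indicator_nonneg fun _ _ => zero_le_one) (Set.indicator_nonneg fun _ _ => zero_le_one)
    (hmono A hA) (hmono B hB) hν
  simpa [hsum (A ∩ B), Set.inter_indicator_one, ← hsum] using this

theorem dependsOn_of_imp {ι : Type*} {α : ι → Type*} {P : (Π i, α i) → Prop} {s : Set ι}
    (h : ∀ x y, (∀ i ∈ s, x i = y i) → P x → P y) : DependsOn P s :=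
  fun x y hxy => propext ⟨h x y hxy, h y x fun i hi => (hxy i hi).symm⟩

abbrev Edge := (ℤ × ℤ) × Bool

def OpenStep (ω : EdgeConf) (z w : ℤ × ℤ) : Prop :=
  ∃ d, ω (z, d) = true ∧ w = z + dirVec d

section OpenPaths

variable {ω ω' : EdgeConf} {x y x' y' z w : ℤ × ℤ}

theorem OpenStep.le (h : OpenStep ω z w) : z ≤ w := by
  obtain ⟨d, -, rfl⟩ := h
  cases d <;> simp [dirVec, Prod.le_def]

theorem OpenStep.fst_add_snd (h : OpenStep ω z w) : w.1 + w.2 = z.1 + z.2 + 1 := by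
  obtain ⟨d, -, rfl⟩ := h
  cases d <;> simp [dirVec] <;> ring

theorem fst_add_snd_of_forall_openStep {f : ℕ → ℤ × ℤ} {n : ℕ}
    (hf : ∀ m < n, OpenStep ω (f m) (f (m + 1))) :
    (f n).1 + (f n).2 = (f 0).1 + (f 0).2 + n := by
  induction n with
  | zero => simp
  | succ n ih =>
    rw [(hf n n.lt_succ_self).fst_add_snd, ih fun m hm => hf m (by omega)]
    push_cast
    ring

theorem openPathTo_iff_reflTransGen : OpenPathTo ω x y ↔ ReflTransGen (OpenStep ω) x y := by
  rw [reflTransGen_iff_exists_seq]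
  rfl

theorem OpenPathTo.le (h : OpenPathTo ω x y) : x ≤ y := by
  rw [openPathTo_iff_reflTransGen] at h
  simpa [reflTransGen_eq_self] using ReflTransGen.mono (fun _ _ => OpenStep.le) _ _ h

theorem OpenPathTo.mono (hω : ω ≤ ω') (h : OpenPathTo ω x y) : OpenPathTo ω' x y := by
  obtain ⟨n, f, hf0, hfn, hf⟩ := h
  refine ⟨n, f, hf0, hfn, fun m hm => ?_⟩
  obtain ⟨d, hopen, hstep⟩ := hf m hm
  exact ⟨d, Bool.le_iff_imp.mp (hω _) hopen, hstep⟩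

theorem OpenPathTo.congr (h : OpenPathTo ω x y)
    (hωω' : ∀ z, x ≤ z → z ≤ y → ∀ d, ω (z, d) = ω' (z, d)) : OpenPathTo ω' x y := by
  rw [openPathTo_iff_reflTransGen] at h ⊢
  induction h using ReflTransGen.head_induction_on with
  | refl => rfl
  | head hstep hrest ih =>
    have hzw := hstep.le
    have hwy := (openPathTo_iff_reflTransGen.2 hrest).le
    obtain ⟨d, hopen, rfl⟩ := hstep
    refine .head ⟨d, ?_, rfl⟩ (ih fun z hz => hωω' z (hzw.trans hz))
    rwa [← hωω' _ le_rfl (hzw.trans hwy)]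

theorem OpenPathTo.cross (h : OpenPathTo ω x y) (h' : OpenPathTo ω x' y')
    (hx : x.1 + x.2 = x'.1 + x'.2) (hy : y.1 + y.2 = y'.1 + y'.2)
    (hx₁ : x.1 ≤ x'.1) (hy₁ : y'.1 ≤ y.1) : OpenPathTo ω x y' := by
  obtain ⟨n, f, rfl, rfl, hf : ∀ m < n, OpenStep ω (f m) (f (m + 1))⟩ := h
  obtain ⟨n', g, rfl, rfl, hg : ∀ m < n', OpenStep ω (g m) (g (m + 1))⟩ := h'
  obtain rfl : n' = n := by
    have := fst_add_snd_of_forall_openStep hf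
    have := fst_add_snd_of_forall_openStep hg
    omega
  -- `f m` and `g m` lie on the same antidiagonal, so `f m = g m` once their first coordinates agree
  obtain ⟨m, hmn, hm⟩ := Int.exists_eq_zero_of_le_add_one (d := fun m => (f m).1 - (g m).1)
    (by simpa using hx₁) (by simpa using hy₁) fun m hm => by
      have := (hf m hm).le
      have := (hf m hm).fst_add_snd
      have := (hg m hm).le
      simp only [Prod.le_def] at *
      omega
  have hfg : f m = g m := by
    have := fst_add_snd_of_forall_openStep (n := m) fun k hk => hf k (by omega)
    have := fst_add_snd_of_forall_openStep (n := m) fun k hk => hg k (by omega)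
    ext <;> omega
  rw [openPathTo_iff_reflTransGen]
  exact (reflTransGen_of_forall_lt m.zero_le fun k _ hk => hf k (by omega)).trans
    (hfg ▸ reflTransGen_of_forall_lt hmn fun k _ hk => hg k hk)

end OpenPaths

def diagReflect : Equiv.Perm Edge where
  toFun e := (e.1.swap, !e.2)
  invFun e := (e.1.swap, !e.2)
  left_inv e := by simp
  right_inv e := by simp

/-- The rotation `z ↦ c - z` reverses orientation: it sends the edge from `z` to `z + v`
onto the edge from `c - z - v` to `c - z`. -/
def pointReflect (c : ℤ × ℤ) : Equiv.Perm Edge where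
  toFun e := (c - e.1 - dirVec e.2, e.2)
  invFun e := (c - e.1 - dirVec e.2, e.2)
  left_inv e := by simp [sub_sub]
  right_inv e := by simp [sub_sub]

section Symmetries

variable {ω : EdgeConf} {x y z w : ℤ × ℤ}

theorem openStep_comp_diagReflect :
    OpenStep (ω ∘ diagReflect) z w ↔ OpenStep ω z.swap w.swap := by
  simp only [OpenStep, Bool.exists_bool, Function.comp_apply, diagReflect, Equiv.coe_fn_mk,
    dirVec, Prod.ext_iff, Bool.not_false, Bool.not_true, Bool.false_eq_true, ↓reduceIte,
    Prod.fst_add, Prod.snd_add, Prod.fst_swap, Prod.snd_swap, add_zero]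
  tauto

theorem openStep_comp_pointReflect (c : ℤ × ℤ) :
    OpenStep (ω ∘ pointReflect c) z w ↔ OpenStep ω (c - w) (c - z) := by
  refine exists_congr fun d => ?_
  simp only [Function.comp_apply, pointReflect, Equiv.coe_fn_mk]
  constructor
  · rintro ⟨h, rfl⟩
    exact ⟨by rwa [sub_add_eq_sub_sub], by abel⟩
  · rintro ⟨h, hzw⟩
    obtain rfl : w = z + dirVec d := by linear_combination hzw
    exact ⟨by rwa [sub_add_eq_sub_sub] at h, rfl⟩

theorem openPathTo_comp_diagReflect :
    OpenPathTo (ω ∘ diagReflect) x y ↔ OpenPathTo ω x.swap y.swap := by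
  simp only [openPathTo_iff_reflTransGen]
  exact reflTransGen_iff_of_equiv (Equiv.prodComm ℤ ℤ) fun _ _ => openStep_comp_diagReflect

theorem openPathTo_comp_pointReflect (c : ℤ × ℤ) :
    OpenPathTo (ω ∘ pointReflect c) x y ↔ OpenPathTo ω (c - y) (c - x) := by
  rw [openPathTo_iff_reflTransGen, openPathTo_iff_reflTransGen, ← reflTransGen_swap]
  exact reflTransGen_iff_of_equiv (Equiv.subLeft c) fun _ _ => openStep_comp_pointReflect c

end Symmetries

section IIDEdges

variable {μ ν : Measure EdgeConf} {q : ℝ} {P Q : EdgeConf → Prop} {s t : Finset Edge}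

theorem DependsOn.setOf_eq_preimage_restrict (hP : DependsOn P s) :
    {ω | P ω} = s.restrict ⁻¹' {η | P (Function.updateFinset (⊥ : EdgeConf) s η)} := by
  ext ω
  exact eq_iff_iff.mp (hP fun e he => by simp [Function.updateFinset, Finset.mem_coe.mp he])

theorem DependsOn.measurableSet (hP : DependsOn P s) : MeasurableSet {ω | P ω} := by
  rw [hP.setOf_eq_preimage_restrict]
  exact s.measurable_restrict (Set.toFinite _).measurableSet

theorem measurableSet_cylinder (s : Finset Edge) (b : EdgeConf) :
    MeasurableSet {ω : EdgeConf | ∀ e ∈ s, ω e = b e} := by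
  simp only [Set.ofPred_forall]
  measurability

theorem IIDEdges.map_comp (hμ : IIDEdges μ q) (σ : Equiv.Perm Edge) :
    IIDEdges (μ.map (· ∘ σ)) q := by
  intro s b
  rw [Measure.map_apply (by fun_prop) (measurableSet_cylinder s b)]
  have : (· ∘ σ) ⁻¹' {ω : EdgeConf | ∀ e ∈ s, ω e = b e} =
      {ω | ∀ e ∈ s.map σ.toEmbedding, ω e = (b ∘ σ.symm) e} := by
    ext
    simp only [Set.mem_preimage, Set.mem_ofPred_eq, Finset.forall_mem_map, Function.comp_apply,
      Equiv.coe_toEmbedding, Equiv.symm_apply_apply]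
  rw [this, hμ, Finset.prod_map]
  simp

theorem IIDEdges.map_restrict_singleton (hμ : IIDEdges μ q) (s : Finset Edge) (η : s → Bool) :
    μ.map s.restrict {η} = ENNReal.ofReal (∏ e, if η e then q else 1 - q) := by
  rw [Measure.map_apply s.measurable_restrict (measurableSet_singleton η)]
  have : (s.restrict : EdgeConf → s → Bool) ⁻¹' {η} =
      {ω : EdgeConf | ∀ e ∈ s, ω e = Function.updateFinset (⊥ : EdgeConf) s η e} := by
    ext ω
    simp only [Set.mem_preimage, Set.mem_singleton_iff, funext_iff, Finset.restrict,
      Subtype.forall, Set.mem_ofPred_eq]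
    exact forall₂_congr fun e he => by simp [Function.updateFinset, he]
  rw [this, hμ, ← Finset.prod_coe_sort]
  simp [Function.updateFinset]

theorem IIDEdges.map_restrict_eq (hμ : IIDEdges μ q) (hν : IIDEdges ν q) (s : Finset Edge) :
    μ.map s.restrict = ν.map s.restrict :=
  Measure.ext_of_singleton fun η => by
    rw [hμ.map_restrict_singleton, hν.map_restrict_singleton]

theorem IIDEdges.measure_eq_of_dependsOn (hμ : IIDEdges μ q) (hν : IIDEdges ν q)
    (hP : DependsOn P s) : μ {ω | P ω} = ν {ω | P ω} := by
  have hT : MeasurableSet {η : s → Bool | P (Function.updateFinset ⊥ s η)} :=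
    (Set.toFinite _).measurableSet
  rw [hP.setOf_eq_preimage_restrict, ← Measure.map_apply s.measurable_restrict hT,
    ← Measure.map_apply s.measurable_restrict hT, hμ.map_restrict_eq hν]

theorem IIDEdges.measure_comp_eq (hμ : IIDEdges μ q) (σ : Equiv.Perm Edge)
    (hP : DependsOn P s) : μ {ω | P (ω ∘ σ)} = μ {ω | P ω} := by
  rw [← (hμ.map_comp σ).measure_eq_of_dependsOn hμ hP,
    Measure.map_apply (by fun_prop) hP.measurableSet]
  rfl

theorem IIDEdges.measureReal_mul_le [IsProbabilityMeasure μ] (hμ : IIDEdges μ q) (hq0 : 0 ≤ q)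
    (hq1 : q ≤ 1) (hP : DependsOn P s) (hQ : DependsOn Q t) (hPm : Monotone P)
    (hQm : Monotone Q) : μ.real {ω | P ω} * μ.real {ω | Q ω} ≤ μ.real {ω | P ω ∧ Q ω} := by
  classical
  set u := s ∪ t
  replace hP : DependsOn P u := hP.mono (Finset.coe_subset.2 Finset.subset_union_left)
  replace hQ : DependsOn Q u := hQ.mono (Finset.coe_subset.2 Finset.subset_union_right)
  have hupper : ∀ R : EdgeConf → Prop, Monotone R →
      IsUpperSet {η : u → Bool | R (Function.updateFinset (⊥ : EdgeConf) u η)} :=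
    fun R hR η η' hle => hR fun e => by
      by_cases he : e ∈ u <;> simp [Function.updateFinset, he, hle _]
  have hweight : ∀ η, (μ.map u.restrict).real {η} = ∏ e, if η e then q else 1 - q := fun η => by
    rw [measureReal_def, hμ.map_restrict_singleton, ENNReal.toReal_ofReal
      (Finset.prod_nonneg fun e _ => by split_ifs <;> linarith)]
  have := Measure.isProbabilityMeasure_map (μ := μ) u.measurable_restrict.aemeasurable
  have hfkg := measureReal_mul_measureReal_le_of_isUpperSet (ν := μ.map u.restrict)
    (fun a b => le_of_eq ?_) (hupper P hPm) (hupper Q hQm)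
  · simp only [map_measureReal_apply u.measurable_restrict (Set.toFinite _).measurableSet,
      Set.preimage_inter, ← hP.setOf_eq_preimage_restrict, ← hQ.setOf_eq_preimage_restrict] at hfkg
    rwa [Set.ofPred_and]
  · -- coordinatewise `{a e, b e} = {(a ⊓ b) e, (a ⊔ b) e}`
    simp only [hweight, ← Finset.prod_mul_distrib]
    refine Finset.prod_congr rfl fun e _ => ?_
    cases ha : a e <;> cases hb : b e <;> simp [ha, hb, mul_comm]

end IIDEdges

def OpenPathToSet (ω : EdgeConf) (x : ℤ × ℤ) (S : Set (ℤ × ℤ)) : Prop :=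
  ∃ z ∈ S, OpenPathTo ω x z

def OpenPathFromSet (ω : EdgeConf) (S : Set (ℤ × ℤ)) (y : ℤ × ℤ) : Prop :=
  ∃ z ∈ S, OpenPathTo ω z y

section PathEvents

variable {ω : EdgeConf} {x y : ℤ × ℤ} {S : Set (ℤ × ℤ)}

theorem monotone_openPathToSet (x : ℤ × ℤ) (S : Set (ℤ × ℤ)) :
    Monotone (OpenPathToSet · x S) :=
  fun _ _ h ⟨z, hz, p⟩ => ⟨z, hz, p.mono h⟩

theorem monotone_openPathFromSet (S : Set (ℤ × ℤ)) (y : ℤ × ℤ) :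
    Monotone (OpenPathFromSet · S y) :=
  fun _ _ h ⟨z, hz, p⟩ => ⟨z, hz, p.mono h⟩

theorem dependsOn_openPathToSet {u : ℤ × ℤ} (hS : ∀ z ∈ S, x ≤ z → z ≤ u) :
    DependsOn (OpenPathToSet · x S) ↑(Finset.Icc x u ×ˢ Finset.univ : Finset Edge) :=
  dependsOn_of_imp fun _ _ h ⟨z, hz, p⟩ => ⟨z, hz, p.congr fun w hxw hwz _ =>
    h _ (by simp [hxw, hwz.trans (hS z hz p.le)])⟩

theorem dependsOn_openPathFromSet {l : ℤ × ℤ} (hS : ∀ z ∈ S, z ≤ y → l ≤ z) :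
    DependsOn (OpenPathFromSet · S y) ↑(Finset.Icc l y ×ˢ Finset.univ : Finset Edge) :=
  dependsOn_of_imp fun _ _ h ⟨z, hz, p⟩ => ⟨z, hz, p.congr fun w hzw hwy _ =>
    h _ (by simp [hwy, (hS z hz p.le).trans hzw])⟩

theorem openPathToSet_comp_diagReflect :
    OpenPathToSet (ω ∘ diagReflect) x S ↔ OpenPathToSet ω x.swap (Prod.swap ⁻¹' S) := by
  simp only [OpenPathToSet, openPathTo_comp_diagReflect]
  exact ⟨fun ⟨z, hz, p⟩ => ⟨z.swap, by simpa, p⟩, fun ⟨z, hz, p⟩ => ⟨z.swap, hz, by simpa⟩⟩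

theorem openPathFromSet_comp_pointReflect (c : ℤ × ℤ) :
    OpenPathFromSet (ω ∘ pointReflect c) S y ↔ OpenPathToSet ω (c - y) ((c - ·) ⁻¹' S) := by
  simp only [OpenPathFromSet, OpenPathToSet, openPathTo_comp_pointReflect]
  exact ⟨fun ⟨z, hz, p⟩ => ⟨c - z, by simpa, p⟩, fun ⟨z, hz, p⟩ => ⟨c - z, hz, by simpa⟩⟩

theorem InfOpenPath.openPathToSet (h : InfOpenPath ω x) (n : ℕ) :
    OpenPathToSet ω x {z | z.1 + z.2 = x.1 + x.2 + n} := by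
  obtain ⟨f, rfl, hf⟩ := h
  exact ⟨f n, fst_add_snd_of_forall_openStep fun m _ => hf m, n, f, rfl, rfl, fun m _ => hf m⟩

end PathEvents

def antidiagBelow (n : ℤ) : Set (ℤ × ℤ) := {z | z.1 + z.2 = n ∧ z.2 ≤ z.1}

theorem dependsOn_openPathToSet_antidiagBelow (n : ℕ) :
    DependsOn (OpenPathToSet · (0, 0) (antidiagBelow n))
      ↑(Finset.Icc (0, 0) ((n : ℤ), (n : ℤ)) ×ˢ Finset.univ : Finset Edge) :=
  dependsOn_openPathToSet fun z hz h0 => by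
    simp only [antidiagBelow, Set.mem_ofPred_eq, Prod.le_def] at hz h0 ⊢
    omega

theorem dependsOn_openPathFromSet_antidiagBelow (r : ℕ) :
    DependsOn (OpenPathFromSet · (antidiagBelow 0) ((r : ℤ), (r : ℤ)))
      ↑(Finset.Icc (-(r : ℤ), -(r : ℤ)) ((r : ℤ), (r : ℤ)) ×ˢ Finset.univ : Finset Edge) :=
  dependsOn_openPathFromSet fun z hz hzr => by
    simp only [antidiagBelow, Set.mem_ofPred_eq, Prod.le_def] at hz hzr ⊢
    omega

theorem OpenPathToSet.openPathTo_of_openPathFromSet {ω : EdgeConf} {r : ℕ}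
    (hA : OpenPathToSet ω (0, 0) (antidiagBelow (2 * r)))
    (hB : OpenPathFromSet ω (antidiagBelow 0) ((r : ℤ), (r : ℤ))) :
    OpenPathTo ω (0, 0) ((r : ℤ), (r : ℤ)) := by
  obtain ⟨z, ⟨hz, hz'⟩, p⟩ := hA
  obtain ⟨w, ⟨hw, hw'⟩, p'⟩ := hB
  exact p.cross p' (by simp; omega) (by simp; omega) (by simp; omega) (by simp; omega)

section IIDEdges

variable {μ : Measure EdgeConf} {q : ℝ}

theorem IIDEdges.measureReal_infOpenPath_le [IsFiniteMeasure μ] (hμ : IIDEdges μ q) (n : ℕ) :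
    μ.real {ω | InfOpenPath ω (0, 0)} ≤
      2 * μ.real {ω | OpenPathToSet ω (0, 0) (antidiagBelow n)} := by
  have hsymm : μ.real {ω | OpenPathToSet ω (0, 0) (Prod.swap ⁻¹' antidiagBelow n)} =
      μ.real {ω | OpenPathToSet ω (0, 0) (antidiagBelow n)} := by
    simp only [measureReal_def, ← hμ.measure_comp_eq diagReflect
      (dependsOn_openPathToSet_antidiagBelow n), openPathToSet_comp_diagReflect, Prod.swap_prod_mk]
  have hcover : {ω | InfOpenPath ω (0, 0)} ⊆ {ω | OpenPathToSet ω (0, 0) (antidiagBelow n)} ∪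
      {ω | OpenPathToSet ω (0, 0) (Prod.swap ⁻¹' antidiagBelow n)} := by
    intro ω h
    obtain ⟨z, hz, p⟩ := h.openPathToSet n
    simp only [Set.mem_ofPred_eq, zero_add] at hz
    rcases le_total z.2 z.1 with h | h
    · exact Or.inl ⟨z, ⟨hz, h⟩, p⟩
    · exact Or.inr ⟨z, ⟨by simp [hz, add_comm], h⟩, p⟩
  calc _ ≤ _ := measureReal_mono hcover
    _ ≤ _ := measureReal_union_le _ _
    _ = _ := by rw [hsymm]; ring

theorem IIDEdges.measure_openPathFromSet_antidiagBelow (hμ : IIDEdges μ q) (r : ℕ) :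
    μ {ω | OpenPathFromSet ω (antidiagBelow 0) ((r : ℤ), (r : ℤ))} =
      μ {ω | OpenPathToSet ω (0, 0) (antidiagBelow (2 * r))} := by
  have hsets : (((r : ℤ), (r : ℤ)) - ·) ⁻¹' antidiagBelow 0 =
      Prod.swap ⁻¹' antidiagBelow (2 * r) := by
    ext z
    simp only [antidiagBelow, Set.mem_preimage, Set.mem_ofPred_eq, Prod.fst_sub, Prod.snd_sub,
      Prod.fst_swap, Prod.snd_swap]
    omega
  calc _ = μ {ω | OpenPathFromSet (ω ∘ pointReflect (r, r)) (antidiagBelow 0) (r, r)} :=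
        (hμ.measure_comp_eq _ (dependsOn_openPathFromSet_antidiagBelow r)).symm
    _ = μ {ω | OpenPathToSet (ω ∘ diagReflect) (0, 0) (antidiagBelow (2 * r))} := by
        simp only [openPathFromSet_comp_pointReflect, openPathToSet_comp_diagReflect, sub_self,
          hsets, Prod.mk_zero_zero, Prod.swap_zero]
    _ = _ := by
        exact_mod_cast hμ.measure_comp_eq _ (dependsOn_openPathToSet_antidiagBelow (2 * r))

end IIDEdges

theorem oriented_perc_diag_lower_bound_general (q : ℝ) (hq0 : 0 ≤ q) (hq1 : q ≤ 1)
    (μ : Measure EdgeConf) [IsProbabilityMeasure μ] (hiid : IIDEdges μ q)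
    (θ : ℝ) (hθ : θ = (μ {ω | InfOpenPath ω (0, 0)}).toReal) :
    ∀ r : ℕ, 1 ≤ r →
      (θ / 2) ^ 2 ≤ (μ {ω | OpenPathTo ω (0, 0) ((r : ℤ), (r : ℤ))}).toReal := by
  intro r _
  set A := {ω | OpenPathToSet ω (0, 0) (antidiagBelow (2 * r))}
  set B := {ω | OpenPathFromSet ω (antidiagBelow 0) ((r : ℤ), (r : ℤ))}
  have hθ0 : 0 ≤ θ := hθ ▸ ENNReal.toReal_nonneg
  have hθA : θ ≤ 2 * μ.real A := by
    rw [hθ, ← measureReal_def]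
    exact_mod_cast hiid.measureReal_infOpenPath_le (2 * r)
  have hBA : μ.real B = μ.real A := by
    rw [measureReal_def, measureReal_def, hiid.measure_openPathFromSet_antidiagBelow]
  calc (θ / 2) ^ 2 ≤ μ.real A * μ.real B := by
        rw [hBA, ← sq]
        exact pow_le_pow_left₀ (by linarith) (by linarith) 2
    _ ≤ μ.real {ω | OpenPathToSet ω (0, 0) (antidiagBelow (2 * r)) ∧
          OpenPathFromSet ω (antidiagBelow 0) ((r : ℤ), (r : ℤ))} :=
        hiid.measureReal_mul_le hq0 hq1
          (by exact_mod_cast dependsOn_openPathToSet_antidiagBelow (2 * r))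
          (dependsOn_openPathFromSet_antidiagBelow r) (monotone_openPathToSet _ _)
          (monotone_openPathFromSet _ _)
    _ ≤ _ := measureReal_mono fun ω ⟨hA, hB⟩ => hA.openPathTo_of_openPathFromSet hB

/-- In oriented bond percolation on ℤ² with parameter `q`, if the probability `θ`
of an infinite open oriented path from the origin is positive, then for every
`r ≥ 1` the probability of an open oriented path from `(0,0)` to `(r,r)` is at
least `(θ/2)²`. -/
theorem oriented_perc_diag_lower_bound (q : ℝ) (hq0 : 0 ≤ q) (hq1 : q ≤ 1)
    (μ : Measure EdgeConf) [IsProbabilityMeasure μ] (hiid : IIDEdges μ q)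
    (θ : ℝ) (hθ : θ = (μ {ω | InfOpenPath ω (0, 0)}).toReal) (hθpos : 0 < θ) :
    ∀ r : ℕ, 1 ≤ r →
      (θ / 2) ^ 2 ≤ (μ {ω | OpenPathTo ω (0, 0) ((r : ℤ), (r : ℤ))}).toReal :=
  oriented_perc_diag_lower_bound_general q hq0 hq1 μ hiid θ hθ
end

section
/- In the two-dimensional traffic model (North cars move North at odd steps, East cars move East at even steps, when the site ahead is empty), no car lying on an infinite blocking path (in the initial configuration) ever moves. -/
/-- The state of a site: empty, an East-facing car, or a North-facing car. -/
inductive Cell : Type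
  | empty : Cell
  | E : Cell
  | N : Cell
  deriving DecidableEq

/-- A traffic configuration on ℤ². -/
abbrev Conf := ℤ × ℤ → Cell

/-- One step of a blocking path for configuration `σ`: cases (i)-(iv). -/
def BlockStep (σ : Conf) (z w : ℤ × ℤ) : Prop :=
  (σ z = Cell.E ∧ w = z + (1, 0)) ∨
  (σ z = Cell.N ∧ w = z + (0, 1)) ∨
  (σ z = Cell.E ∧ σ (z + (1, 0)) = Cell.E ∧ σ (z + (1, -1)) = Cell.N ∧
    w = z + (1, 1)) ∨
  (σ z = Cell.N ∧ σ (z + (0, 1)) = Cell.N ∧ σ (z + (-1, 1)) = Cell.E ∧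
    w = z + (1, 1))

/-- One North step: every North car with the site above it empty moves up;
all such moves are simultaneous. -/
def northStep (η : Conf) : Conf := fun z =>
  if η z = Cell.N ∧ η (z + (0, 1)) = Cell.empty then Cell.empty
  else if η z = Cell.empty ∧ η (z - (0, 1)) = Cell.N then Cell.N
  else η z

/-- One East step: every East car with the site to its right empty moves right;
all such moves are simultaneous. -/
def eastStep (η : Conf) : Conf := fun z =>
  if η z = Cell.E ∧ η (z + (1, 0)) = Cell.empty then Cell.empty
  else if η z = Cell.empty ∧ η (z - (1, 0)) = Cell.E then Cell.E
  else η z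

/-- The configuration at time `t`, starting from `σ` at time 0: North cars move at
odd time steps, East cars at even time steps. -/
def traj (σ : Conf) : ℕ → Conf
  | 0 => σ
  | n + 1 => if Even n then northStep (traj σ n) else eastStep (traj σ n)

lemma ns_E {η : Conf} {x : ℤ × ℤ} (h : η x = Cell.E) : northStep η x = Cell.E := by
  simp [northStep, h]

lemma ns_N {η : Conf} {x : ℤ × ℤ} (h : η x = Cell.N) (h2 : η (x + (0,1)) ≠ Cell.empty) :
    northStep η x = Cell.N := by simp [northStep, h, h2]

lemma ns_N_move {η : Conf} {x : ℤ × ℤ} (h : η x = Cell.N) (h2 : η (x + (0,1)) = Cell.empty) :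
    northStep η x = Cell.empty := by simp [northStep, h, h2]

lemma ns_fill {η : Conf} {x : ℤ × ℤ} (h : η x = Cell.empty) (h2 : η (x - (0,1)) = Cell.N) :
    northStep η x = Cell.N := by simp [northStep, h, h2]

lemma es_N {η : Conf} {x : ℤ × ℤ} (h : η x = Cell.N) : eastStep η x = Cell.N := by
  simp [eastStep, h]

lemma es_E {η : Conf} {x : ℤ × ℤ} (h : η x = Cell.E) (h2 : η (x + (1,0)) ≠ Cell.empty) :
    eastStep η x = Cell.E := by simp [eastStep, h, h2]

lemma es_E_move {η : Conf} {x : ℤ × ℤ} (h : η x = Cell.E) (h2 : η (x + (1,0)) = Cell.empty) :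
    eastStep η x = Cell.empty := by simp [eastStep, h, h2]

lemma es_fill {η : Conf} {x : ℤ × ℤ} (h : η x = Cell.empty) (h2 : η (x - (1,0)) = Cell.E) :
    eastStep η x = Cell.E := by simp [eastStep, h, h2]

lemma traj_succ_even (σ : Conf) {t : ℕ} (h : Even t) :
    traj σ (t+1) = northStep (traj σ t) := by simp [traj, h]

lemma traj_succ_odd (σ : Conf) {t : ℕ} (h : ¬ Even t) :
    traj σ (t+1) = eastStep (traj σ t) := by simp [traj, h]

/-- No car on an infinite blocking path (for the initial configuration) ever moves:
the state of each site on the path never changes. -/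
theorem blocking_path_blocks (σ : Conf) (z : ℕ → ℤ × ℤ)
    (hz : ∀ m : ℕ, BlockStep σ (z m) (z (m + 1))) :
    ∀ m t : ℕ, traj σ t (z m) = σ (z m) := by
  have hne : ∀ m, σ (z m) ≠ Cell.empty := by
    intro m
    rcases hz m with ⟨h,_⟩|⟨h,_⟩|⟨h,_⟩|⟨h,_⟩ <;> simp [h]
  suffices H : ∀ t, ∀ m,
      traj σ t (z m) = σ (z m) ∧
      (σ (z m) = Cell.E → σ (z m + (1,0)) = Cell.E → σ (z m + (1,-1)) = Cell.N →
        z (m+1) = z m + (1,1) →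
        (traj σ t (z m + (1,0)) = Cell.E ∧ traj σ t (z m + (1,-1)) = Cell.N) ∨
        (traj σ t (z m + (1,0)) = Cell.empty ∧ traj σ t (z m + (1,-1)) = Cell.N ∧ Even t) ∨
        traj σ t (z m + (1,0)) = Cell.N) ∧
      (σ (z m) = Cell.N → σ (z m + (0,1)) = Cell.N → σ (z m + (-1,1)) = Cell.E →
        z (m+1) = z m + (1,1) →
        (traj σ t (z m + (0,1)) = Cell.N ∧ traj σ t (z m + (-1,1)) = Cell.E) ∨
        (traj σ t (z m + (0,1)) = Cell.empty ∧ traj σ t (z m + (-1,1)) = Cell.E ∧ ¬ Even t) ∨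
        traj σ t (z m + (0,1)) = Cell.E) by
    intro m t; exact (H t m).1
  intro t
  induction t with
  | zero =>
    intro m
    exact ⟨rfl, fun _ h2 h3 _ => Or.inl ⟨h2, h3⟩,
      fun _ h2 h3 _ => Or.inl ⟨h2, h3⟩⟩
  | succ t ih =>
    intro m
    -- coordinate arithmetic
    have e1 : z m + (1,0) - (0,1) = z m + (1,-1) := by rw [add_sub_assoc]; norm_num
    have e2 : z m + (1,-1) + (0,1) = z m + (1,0) := by rw [add_assoc]; norm_num
    have e3 : z m + (1,0) + (0,1) = z m + (1,1) := by rw [add_assoc]; norm_num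
    have e4 : z m + (0,1) - (1,0) = z m + (-1,1) := by rw [add_sub_assoc]; norm_num
    have e5 : z m + (-1,1) + (1,0) = z m + (0,1) := by rw [add_assoc]; norm_num
    have e6 : z m + (0,1) + (1,0) = z m + (1,1) := by rw [add_assoc]; norm_num
    have hm := (ih m).1
    have hm1 := (ih (m+1)).1
    have hnext : traj σ t (z (m+1)) ≠ Cell.empty := by rw [hm1]; exact hne (m+1)
    constructor
    · -- the path site itself does not change
      rcases hz m with ⟨hE, hw⟩ | ⟨hN, hw⟩ | ⟨hE, ha, hb, hw⟩ | ⟨hN, hc, hd, hw⟩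
      · by_cases hpar : Even t
        · rw [traj_succ_even σ hpar, ns_E (hm.trans hE)]; exact hE.symm
        · rw [traj_succ_odd σ hpar]
          rw [es_E (hm.trans hE) (by rw [← hw]; exact hnext)]; exact hE.symm
      · by_cases hpar : Even t
        · rw [traj_succ_even σ hpar]
          rw [ns_N (hm.trans hN) (by rw [← hw]; exact hnext)]; exact hN.symm
        · rw [traj_succ_odd σ hpar, es_N (hm.trans hN)]; exact hN.symm
      · by_cases hpar : Even t
        · rw [traj_succ_even σ hpar, ns_E (hm.trans hE)]; exact hE.symm
        · rw [traj_succ_odd σ hpar]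
          have hblk : traj σ t (z m + (1,0)) ≠ Cell.empty := by
            rcases (ih m).2.1 hE ha hb hw with ⟨h1, _⟩ | ⟨_, _, h3⟩ | h1
            · rw [h1]; simp
            · exact absurd h3 hpar
            · rw [h1]; simp
          rw [es_E (hm.trans hE) hblk]; exact hE.symm
      · by_cases hpar : Even t
        · rw [traj_succ_even σ hpar]
          have hblk : traj σ t (z m + (0,1)) ≠ Cell.empty := by
            rcases (ih m).2.2 hN hc hd hw with ⟨h1, _⟩ | ⟨_, _, h3⟩ | h1
            · rw [h1]; simp
            · exact absurd hpar h3
            · rw [h1]; simp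
          rw [ns_N (hm.trans hN) hblk]; exact hN.symm
        · rw [traj_succ_odd σ hpar, es_N (hm.trans hN)]; exact hN.symm
    constructor
    · -- invariant for case (iii)
      intro hE ha hb hw
      have hup : traj σ t (z m + (1,0) + (0,1)) ≠ Cell.empty := by
        rw [e3, ← hw]; exact hnext
      rcases (ih m).2.1 hE ha hb hw with ⟨h1, h2⟩ | ⟨h1, h2, h3⟩ | h1
      · by_cases hpar : Even t
        · rw [traj_succ_even σ hpar]
          exact Or.inl ⟨ns_E h1, ns_N h2 (by rw [e2, h1]; simp)⟩
        · rw [traj_succ_odd σ hpar]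
          by_cases hmv : traj σ t (z m + (1,0) + (1,0)) = Cell.empty
          · refine Or.inr (Or.inl ⟨es_E_move h1 hmv, es_N h2, ?_⟩)
            simpa [Nat.even_add_one] using hpar
          · exact Or.inl ⟨es_E h1 hmv, es_N h2⟩
      · rw [traj_succ_even σ h3]
        exact Or.inr (Or.inr (ns_fill h1 (by rw [e1]; exact h2)))
      · by_cases hpar : Even t
        · rw [traj_succ_even σ hpar]
          exact Or.inr (Or.inr (ns_N h1 hup))
        · rw [traj_succ_odd σ hpar]
          exact Or.inr (Or.inr (es_N h1))
    · -- invariant for case (iv)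
      intro hN hc hd hw
      have hup : traj σ t (z m + (0,1) + (1,0)) ≠ Cell.empty := by
        rw [e6, ← hw]; exact hnext
      rcases (ih m).2.2 hN hc hd hw with ⟨h1, h2⟩ | ⟨h1, h2, h3⟩ | h1
      · by_cases hpar : Even t
        · rw [traj_succ_even σ hpar]
          by_cases hmv : traj σ t (z m + (0,1) + (0,1)) = Cell.empty
          · refine Or.inr (Or.inl ⟨ns_N_move h1 hmv, ns_E h2, ?_⟩)
            simpa [Nat.even_add_one] using hpar
          · exact Or.inl ⟨ns_N h1 hmv, ns_E h2⟩
        · rw [traj_succ_odd σ hpar]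
          exact Or.inl ⟨es_N h1, es_E h2 (by rw [e5, h1]; simp)⟩
      · rw [traj_succ_odd σ h3]
        exact Or.inr (Or.inr (es_fill h1 (by rw [e4]; exact h2)))
      · by_cases hpar : Even t
        · rw [traj_succ_even σ hpar]
          exact Or.inr (Or.inr (ns_E h1))
        · rw [traj_succ_odd σ hpar]
          exact Or.inr (Or.inr (es_E h1 hup))
end

section
/- Let q exceed the critical probability for oriented bond percolation on ℤ², and suppose inf_{r≥1} P((0,0) → (r,r)) = γ > 0. For linearly independent a, b ∈ ℤ², let ℓ be the smallest positive integer such that (ℓ,ℓ) is identified with (0,0) in the skew torus T(a,b). Then in bond percolation with parameter q on T(a,b), the probability that there is an open oriented cycle is at least γ^ℓ. -/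
open MeasureTheory

/-- The critical probability for oriented bond percolation on ℤ²: the supremum of
parameters for which the origin percolates with probability zero. -/
noncomputable def pcOriented : ℝ :=
  sSup {p : ℝ | p ∈ Set.Icc (0 : ℝ) 1 ∧ ∀ μ : Measure EdgeConf,
    IsProbabilityMeasure μ → IIDEdges μ p → μ {ω | InfOpenPath ω (0, 0)} = 0}

/-- Edges of the skew torus `T(a,b)`: a vertex of `(ℤ×ℤ) ⧸ ⟨a,b⟩` together with a
direction (`true` = East, `false` = North). -/
abbrev TorusEdge (H : AddSubgroup (ℤ × ℤ)) := ((ℤ × ℤ) ⧸ H) × Bool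

/-- `μ` makes the edges of the skew torus i.i.d. Bernoulli(q). -/
def IIDTorusEdges (H : AddSubgroup (ℤ × ℤ))
    (μ : Measure (TorusEdge H → Bool)) (q : ℝ) : Prop :=
  ∀ (s : Finset (TorusEdge H)) (b : TorusEdge H → Bool),
    μ {ω | ∀ e ∈ s, ω e = b e} =
      ENNReal.ofReal (∏ e ∈ s, if b e then q else 1 - q)

/-- There is an open oriented cycle in the configuration `ω` on the skew torus:
a closed directed path of positive length all of whose edges are open. -/
def OpenOrientedCycle (H : AddSubgroup (ℤ × ℤ)) (ω : TorusEdge H → Bool) : Prop :=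
  ∃ (n : ℕ) (g : ℕ → ℤ × ℤ), 0 < n ∧
    (QuotientAddGroup.mk (s := H) (g n) = QuotientAddGroup.mk (s := H) (g 0)) ∧
    ∀ m < n, ∃ d : Bool,
      ω (QuotientAddGroup.mk (s := H) (g m), d) = true ∧ g (m + 1) = g m + dirVec d

namespace SkewAux

noncomputable section
open Classical

def wgt (q : ℝ) (x : Bool) : ℝ := if x then q else 1 - q

lemma wgt_nonneg {q : ℝ} (h0 : 0 ≤ q) (h1 : q ≤ 1) (x : Bool) : 0 ≤ wgt q x := by
  cases x <;> simp [wgt] <;> linarith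

def Ex (q : ℝ) {κ : Type*} [Fintype κ] [DecidableEq κ] (f : (κ → Bool) → ℝ) : ℝ :=
  ∑ b : κ → Bool, f b * ∏ i, wgt q (b i)

lemma Ex_nonneg {q : ℝ} (h0 : 0 ≤ q) (h1 : q ≤ 1) {κ : Type*} [Fintype κ] [DecidableEq κ]
    {f : (κ → Bool) → ℝ} (hf : ∀ b, 0 ≤ f b) : 0 ≤ Ex q f :=
  Finset.sum_nonneg fun b _ => mul_nonneg (hf b)
    (Finset.prod_nonneg fun _ _ => wgt_nonneg h0 h1 _)

lemma Ex_mono {q : ℝ} (h0 : 0 ≤ q) (h1 : q ≤ 1) {κ : Type*} [Fintype κ] [DecidableEq κ]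
    {f g : (κ → Bool) → ℝ} (h : ∀ b, f b ≤ g b) : Ex q f ≤ Ex q g :=
  Finset.sum_le_sum fun b _ => mul_le_mul_of_nonneg_right (h b)
    (Finset.prod_nonneg fun _ _ => wgt_nonneg h0 h1 _)

lemma Ex_one (q : ℝ) {κ : Type*} [Fintype κ] [DecidableEq κ] :
    Ex q (fun _ : κ → Bool => (1 : ℝ)) = 1 := by
  unfold Ex
  simp only [one_mul]
  rw [← Fintype.piFinset_univ, ← Finset.prod_univ_sum]
  have h2 : (wgt q true + wgt q false : ℝ) = 1 := by simp [wgt]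
  simp [Fintype.sum_bool, h2]

def bcons {n : ℕ} (x : Bool) (c : Fin n → Bool) : Fin (n + 1) → Bool :=
  Fin.cons x c

lemma Ex_succ (q : ℝ) {n : ℕ} (f : (Fin (n + 1) → Bool) → ℝ) :
    Ex q f = q * Ex q (fun c => f (bcons true c)) +
      (1 - q) * Ex q (fun c => f (bcons false c)) := by
  have key : ∀ (x : Bool) (c : Fin n → Bool),
      f (bcons x c) * ∏ i, wgt q (bcons x c i)
        = wgt q x * (f (bcons x c) * ∏ i, wgt q (c i)) := by
    intro x c
    rw [Fin.prod_univ_succ]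
    simp only [bcons, Fin.cons_zero, Fin.cons_succ]
    ring
  rw [Ex, ← Fintype.sum_equiv (Fin.consEquiv (fun _ : Fin (n + 1) => Bool))
      (fun p : Bool × (Fin n → Bool) => f (bcons p.1 p.2) * ∏ i, wgt q (bcons p.1 p.2 i))
      (fun b => f b * ∏ i, wgt q (b i)) (fun p => rfl)]
  rw [Fintype.sum_prod_type, Fintype.sum_bool]
  simp only [key, ← Finset.mul_sum]
  simp [wgt, Ex]

lemma bcons_le_bcons {n : ℕ} {x y : Bool} {c c' : Fin n → Bool} (hxy : x ≤ y) (hcc : c ≤ c') :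
    bcons x c ≤ bcons y c' := by
  intro i
  refine Fin.cases ?_ ?_ i
  · simpa [bcons] using hxy
  · intro j; simpa [bcons] using hcc j

lemma harris_fin (q : ℝ) (h0 : 0 ≤ q) (h1 : q ≤ 1) :
    ∀ (n : ℕ) (f g : (Fin n → Bool) → ℝ), Monotone f → Monotone g →
      Ex q f * Ex q g ≤ Ex q (fun b => f b * g b) := by
  intro n
  induction n with
  | zero =>
    intro f g _ _
    have h : ∀ h : (Fin 0 → Bool) → ℝ, Ex q h = h default := by
      intro h
      rw [Ex, Fintype.sum_unique]
      simp only [Finset.univ_eq_empty, Finset.prod_empty, mul_one]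
      exact congrArg h (Subsingleton.elim _ _)
    rw [h, h, h]
  | succ n ih =>
    intro f g hf hg
    have hsecf : ∀ x : Bool, Monotone (fun c : Fin n → Bool => f (bcons x c)) :=
      fun x _ _ h => hf (bcons_le_bcons le_rfl h)
    have hsecg : ∀ x : Bool, Monotone (fun c : Fin n → Bool => g (bcons x c)) :=
      fun x _ _ h => hg (bcons_le_bcons le_rfl h)
    set F1 := Ex q (fun c => f (bcons true c))
    set F0 := Ex q (fun c => f (bcons false c))
    set G1 := Ex q (fun c => g (bcons true c))
    set G0 := Ex q (fun c => g (bcons false c))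
    have hF : F0 ≤ F1 := Ex_mono h0 h1 (fun c => hf (bcons_le_bcons (by simp) le_rfl))
    have hG : G0 ≤ G1 := Ex_mono h0 h1 (fun c => hg (bcons_le_bcons (by simp) le_rfl))
    have ih1 := ih (fun c => f (bcons true c)) (fun c => g (bcons true c))
      (hsecf true) (hsecg true)
    have ih0 := ih (fun c => f (bcons false c)) (fun c => g (bcons false c))
      (hsecf false) (hsecg false)
    rw [Ex_succ q f, Ex_succ q g, Ex_succ q (fun b => f b * g b)]
    have e1 : 0 ≤ q * (1 - q) * ((F1 - F0) * (G1 - G0)) :=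
      mul_nonneg (mul_nonneg h0 (by linarith))
        (mul_nonneg (by linarith) (by linarith))
    nlinarith [ih1, ih0, e1]

lemma harris (q : ℝ) (h0 : 0 ≤ q) (h1 : q ≤ 1) {κ : Type*} [Fintype κ] [DecidableEq κ]
    (f g : (κ → Bool) → ℝ) (hf : Monotone f) (hg : Monotone g) :
    Ex q f * Ex q g ≤ Ex q (fun b => f b * g b) := by
  have e : Fin (Fintype.card κ) ≃ κ := (Fintype.equivFin κ).symm
  have reindex : ∀ h : (κ → Bool) → ℝ,
      Ex q h = Ex q (fun b : Fin (Fintype.card κ) → Bool => h (b ∘ e.symm)) := by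
    intro h
    rw [Ex, Ex]
    refine Fintype.sum_equiv (Equiv.arrowCongr e (Equiv.refl Bool))
      (fun b : Fin (Fintype.card κ) → Bool => h (b ∘ e.symm) * ∏ i, wgt q (b i))
      (fun b : κ → Bool => h b * ∏ i, wgt q (b i)) ?_ |>.symm
    intro b
    show h (b ∘ ⇑e.symm) * ∏ i, wgt q (b i)
      = h ((Equiv.arrowCongr e (Equiv.refl Bool)) b) * ∏ i, wgt q (((Equiv.arrowCongr e (Equiv.refl Bool)) b) i)
    have h1' : ((Equiv.arrowCongr e (Equiv.refl Bool)) b) = b ∘ ⇑e.symm := rfl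
    rw [h1']
    congr 1
    exact (Equiv.prod_comp e.symm (fun i => wgt q (b i))).symm
  rw [reindex f, reindex g, reindex (fun b => f b * g b)]
  exact harris_fin q h0 h1 (Fintype.card κ)
    (fun b => f (b ∘ ⇑e.symm)) (fun b => g (b ∘ ⇑e.symm))
    (fun _ _ h => hf (fun i => h (e.symm i))) (fun _ _ h => hg (fun i => h (e.symm i)))


lemma monotone_prod_fun {κ : Type*} [Fintype κ] [DecidableEq κ] {ι' : Type*}
    (t : Finset ι') (χ : ι' → (κ → Bool) → ℝ)
    (hm : ∀ i ∈ t, Monotone (χ i)) (hn : ∀ i ∈ t, ∀ b, 0 ≤ χ i b) :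
    Monotone (fun b => ∏ i ∈ t, χ i b) := by
  classical
  induction t using Finset.induction_on with
  | empty => simp [monotone_const]
  | @insert a t ha ih =>
    intro b b' hbb
    simp only [Finset.prod_insert ha]
    have hm' : ∀ i ∈ t, Monotone (χ i) := fun i hi => hm i (Finset.mem_insert_of_mem hi)
    have hn' : ∀ i ∈ t, ∀ b, 0 ≤ χ i b := fun i hi => hn i (Finset.mem_insert_of_mem hi)
    have hma := hm a (Finset.mem_insert_self a t)
    refine mul_le_mul (hma hbb) (ih hm' hn' hbb) (Finset.prod_nonneg fun i hi => hn' i hi b)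
      (le_trans (hn a (Finset.mem_insert_self a t) b) (hma hbb))

lemma Ex_prod_le (q : ℝ) (h0 : 0 ≤ q) (h1 : q ≤ 1) {κ : Type*} [Fintype κ] [DecidableEq κ]
    {ι' : Type*} (t : Finset ι') (χ : ι' → (κ → Bool) → ℝ)
    (hm : ∀ i ∈ t, Monotone (χ i)) (hn : ∀ i ∈ t, ∀ b, 0 ≤ χ i b) :
    ∏ i ∈ t, Ex q (χ i) ≤ Ex q (fun b => ∏ i ∈ t, χ i b) := by
  classical
  induction t using Finset.induction_on with
  | empty => simp [Ex_one q]
  | @insert a t ha ih =>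
    have hm' : ∀ i ∈ t, Monotone (χ i) := fun i hi => hm i (Finset.mem_insert_of_mem hi)
    have hn' : ∀ i ∈ t, ∀ b, 0 ≤ χ i b := fun i hi => hn i (Finset.mem_insert_of_mem hi)
    rw [Finset.prod_insert ha]
    have step1 : Ex q (χ a) * (∏ i ∈ t, Ex q (χ i)) ≤ Ex q (χ a) * Ex q (fun b => ∏ i ∈ t, χ i b) :=
      mul_le_mul_of_nonneg_left (ih hm' hn')
        (Ex_nonneg h0 h1 (hn a (Finset.mem_insert_self a t)))
    have step2 : Ex q (χ a) * Ex q (fun b => ∏ i ∈ t, χ i b)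
        ≤ Ex q (fun b => χ a b * ∏ i ∈ t, χ i b) :=
      harris q h0 h1 _ _ (hm a (Finset.mem_insert_self a t)) (monotone_prod_fun t χ hm' hn')
    have step3 : Ex q (fun b => χ a b * ∏ i ∈ t, χ i b)
        = Ex q (fun b => ∏ i ∈ insert a t, χ i b) := by
      congr 1; funext b; rw [Finset.prod_insert ha]
    calc Ex q (χ a) * ∏ i ∈ t, Ex q (χ i)
        ≤ Ex q (χ a) * Ex q (fun b => ∏ i ∈ t, χ i b) := step1
      _ ≤ Ex q (fun b => χ a b * ∏ i ∈ t, χ i b) := step2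
      _ = _ := step3

/-! ### Measure-theoretic layer -/

variable {ι : Type*}

def sExt (s : Finset ι) (b : ↥s → Bool) : ι → Bool :=
  fun e => if h : e ∈ s then b ⟨e, h⟩ else false

lemma cylinder_measurableSet (s : Finset ι) (c : ι → Bool) :
    MeasurableSet {ω : ι → Bool | ∀ e ∈ s, ω e = c e} := by
  have h : {ω : ι → Bool | ∀ e ∈ s, ω e = c e}
      = ⋂ e ∈ (s : Set ι), {ω : ι → Bool | ω e = c e} := by
    ext ω; simp
  rw [h]
  refine MeasurableSet.biInter s.countable_toSet (fun e _ => ?_)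
  have h2 : {ω : ι → Bool | ω e = c e} = (fun ω : ι → Bool => ω e) ⁻¹' {c e} := rfl
  rw [h2]
  exact measurable_pi_apply e (measurableSet_singleton (c e))

/-- Probability of an event determined by finitely many coordinates, plus measurability. -/
lemma meas_det (μ : Measure (ι → Bool)) (q : ℝ) (h0 : 0 ≤ q) (h1 : q ≤ 1)
    (hiid : ∀ (s : Finset ι) (b : ι → Bool), μ {ω | ∀ e ∈ s, ω e = b e}
      = ENNReal.ofReal (∏ e ∈ s, if b e then q else 1 - q))
    (s : Finset ι) (A : Set (ι → Bool))
    (hdet : ∀ ω ω' : ι → Bool, (∀ e ∈ s, ω e = ω' e) → ω ∈ A → ω' ∈ A) :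
    μ A = ENNReal.ofReal (Ex q (fun b : ↥s → Bool => if sExt s b ∈ A then 1 else 0))
      ∧ MeasurableSet A := by
  classical
  set T : Finset (↥s → Bool) := Finset.univ.filter (fun b => sExt s b ∈ A) with hT
  have hext : ∀ (ω : ι → Bool) (e : ι) (he : e ∈ s), sExt s (fun x : ↥s => ω x) e = ω e := by
    intro ω e he; simp [sExt, he]
  have hcylEq : A = ⋃ b ∈ T, {ω : ι → Bool | ∀ e ∈ s, ω e = sExt s b e} := by
    ext ω
    constructor
    · intro hω
      have hmem : (fun x : ↥s => ω ↑x) ∈ T := by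
        rw [hT]
        exact Finset.mem_filter.mpr ⟨Finset.mem_univ _, hdet ω _ (fun e he => (hext ω e he).symm) hω⟩
      exact Set.mem_biUnion hmem (fun e he => (hext ω e he).symm)
    · intro hmem
      rcases Set.mem_iUnion₂.1 hmem with ⟨b, hb, hω⟩
      have hb' : sExt s b ∈ A := by
        rw [hT] at hb; simpa using hb
      exact hdet _ ω (fun e he => (hω e he).symm) hb'
  have hmeasCyl : ∀ b : ↥s → Bool,
      MeasurableSet {ω : ι → Bool | ∀ e ∈ s, ω e = sExt s b e} :=
    fun b => cylinder_measurableSet s _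
  have hAmeas : MeasurableSet A := by
    rw [hcylEq]
    exact T.measurableSet_biUnion (fun b _ => hmeasCyl b)
  refine ⟨?_, hAmeas⟩
  have hdisj : (T : Set (↥s → Bool)).PairwiseDisjoint
      (fun b => {ω : ι → Bool | ∀ e ∈ s, ω e = sExt s b e}) := by
    intro b _ b' _ hne
    refine Set.disjoint_left.mpr ?_
    intro ω hω hω'
    apply hne
    funext x
    have e1 := hω x x.2
    have e2 := hω' x x.2
    simp only [sExt, x.2, dif_pos, Subtype.coe_eta] at e1 e2
    rw [← e1, ← e2]
  have hval : ∀ b : ↥s → Bool, μ {ω : ι → Bool | ∀ e ∈ s, ω e = sExt s b e}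
      = ENNReal.ofReal (∏ x : ↥s, wgt q (b x)) := by
    intro b
    rw [hiid s (sExt s b)]
    congr 1
    rw [← Finset.prod_coe_sort s (fun e => if sExt s b e = true then q else 1 - q)]
    refine Finset.prod_congr rfl ?_
    intro x _
    simp [sExt, x.2, wgt, Subtype.coe_eta]
  have hμA : μ A = ∑ b ∈ T, ENNReal.ofReal (∏ x : ↥s, wgt q (b x)) := by
    rw [hcylEq, measure_biUnion_finset hdisj (fun b _ => hmeasCyl b)]
    exact Finset.sum_congr rfl (fun b _ => hval b)
  rw [hμA, ← ENNReal.ofReal_sum_of_nonneg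
    (fun b _ => Finset.prod_nonneg fun x _ => wgt_nonneg h0 h1 _)]
  congr 1
  rw [Ex, hT, Finset.sum_filter]
  refine Finset.sum_congr rfl fun b _ => ?_
  by_cases h : sExt s b ∈ A <;> simp [h]


lemma sExt_mono (s : Finset ι) {b b' : ↥s → Bool} (h : b ≤ b') : sExt s b ≤ sExt s b' := by
  intro e
  by_cases he : e ∈ s
  · simp only [sExt, dif_pos he]; exact h _
  · simp only [sExt, dif_neg he]; exact le_rfl

/-- Harris/FKG at the measure level: intersection of increasing finite-dimensional
events has probability at least the product of probabilities. -/
lemma harris_meas {κ : Type*} (μ : Measure (ι → Bool)) [IsProbabilityMeasure μ]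
    (q : ℝ) (h0 : 0 ≤ q) (h1 : q ≤ 1)
    (hiid : ∀ (s : Finset ι) (b : ι → Bool), μ {ω | ∀ e ∈ s, ω e = b e}
      = ENNReal.ofReal (∏ e ∈ s, if b e then q else 1 - q))
    (t : Finset κ) (A : κ → Set (ι → Bool)) (s : κ → Finset ι)
    (hdet : ∀ i ∈ t, ∀ ω ω' : ι → Bool, (∀ e ∈ s i, ω e = ω' e) → ω ∈ A i → ω' ∈ A i)
    (hinc : ∀ i ∈ t, ∀ ω ω' : ι → Bool, ω ≤ ω' → ω ∈ A i → ω' ∈ A i) :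
    ∏ i ∈ t, μ (A i) ≤ μ (⋂ i ∈ t, A i) := by
  classical
  set S : Finset ι := t.biUnion s with hS
  have hdetS : ∀ i ∈ t, ∀ ω ω' : ι → Bool, (∀ e ∈ S, ω e = ω' e) → ω ∈ A i → ω' ∈ A i :=
    fun i hi ω ω' h => hdet i hi ω ω' (fun e he => h e (Finset.mem_biUnion.mpr ⟨i, hi, he⟩))
  set χ : κ → (↥S → Bool) → ℝ := fun i b => if sExt S b ∈ A i then 1 else 0 with hχ
  have hχm : ∀ i ∈ t, Monotone (χ i) := by
    intro i hi b b' hbb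
    simp only [hχ]
    by_cases h : sExt S b ∈ A i
    · rw [if_pos h, if_pos (hinc i hi _ _ (sExt_mono S hbb) h)]
    · rw [if_neg h]
      by_cases h' : sExt S b' ∈ A i <;> simp [h']
  have hχn : ∀ i ∈ t, ∀ b, 0 ≤ χ i b := by
    intro i hi b
    simp only [hχ]
    by_cases h : sExt S b ∈ A i <;> simp [h]
  have hAi : ∀ i ∈ t, μ (A i) = ENNReal.ofReal (Ex q (χ i)) :=
    fun i hi => (meas_det μ q h0 h1 hiid S (A i) (hdetS i hi)).1
  have hInt : μ (⋂ i ∈ t, A i)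
      = ENNReal.ofReal (Ex q (fun b : ↥S → Bool => ∏ i ∈ t, χ i b)) := by
    have hdetI : ∀ ω ω' : ι → Bool, (∀ e ∈ S, ω e = ω' e)
        → ω ∈ (⋂ i ∈ t, A i) → ω' ∈ (⋂ i ∈ t, A i) := by
      intro ω ω' h hω
      rw [Set.mem_iInter₂] at hω ⊢
      exact fun i hi => hdetS i hi ω ω' h (hω i hi)
    have := (meas_det μ q h0 h1 hiid S (⋂ i ∈ t, A i) hdetI).1
    rw [this]
    congr 1
    refine Finset.sum_congr rfl fun b _ => ?_
    congr 1
    show (if sExt S b ∈ ⋂ i ∈ t, A i then (1:ℝ) else 0) = ∏ i ∈ t, χ i b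
    simp only [hχ]
    rw [Finset.prod_boole]
    exact if_congr Set.mem_iInter₂ rfl rfl
  calc ∏ i ∈ t, μ (A i) = ∏ i ∈ t, ENNReal.ofReal (Ex q (χ i)) :=
        Finset.prod_congr rfl hAi
    _ = ENNReal.ofReal (∏ i ∈ t, Ex q (χ i)) :=
        (ENNReal.ofReal_prod_of_nonneg (fun i hi => Ex_nonneg h0 h1 (hχn i hi))).symm
    _ ≤ ENNReal.ofReal (Ex q (fun b : ↥S → Bool => ∏ i ∈ t, χ i b)) :=
        ENNReal.ofReal_le_ofReal (Ex_prod_le q h0 h1 t χ hχm hχn)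
    _ = μ (⋂ i ∈ t, A i) := hInt.symm


lemma union_pair_measure (μ : Measure (ι → Bool)) [IsProbabilityMeasure μ]
    (q : ℝ)
    (hiid : ∀ (s : Finset ι) (b : ι → Bool), μ {ω | ∀ e ∈ s, ω e = b e}
      = ENNReal.ofReal (∏ e ∈ s, if b e then q else 1 - q))
    (h0 : 0 ≤ q) (h1 : q ≤ 1)
    (e1 e2 e3 e4 : ι) (h12 : e1 ≠ e2) (h13 : e1 ≠ e3) (h14 : e1 ≠ e4)
    (h23 : e2 ≠ e3) (h24 : e2 ≠ e4) (h34 : e3 ≠ e4) :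
    μ {ω : ι → Bool | (ω e1 = true ∧ ω e2 = true) ∨ (ω e3 = true ∧ ω e4 = true)}
      = ENNReal.ofReal (2 * q ^ 2 - q ^ 4) := by
  classical
  set X : Set (ι → Bool) := {ω | ∀ e ∈ ({e1, e2} : Finset ι), ω e = (fun _ => true) e} with hX
  set Y : Set (ι → Bool) := {ω | ∀ e ∈ ({e3, e4} : Finset ι), ω e = (fun _ => true) e} with hY
  have hXval : μ X = ENNReal.ofReal (q ^ 2) := by
    rw [hX, hiid]
    congr 1
    rw [Finset.prod_congr rfl (fun e _ => by simp : ∀ e ∈ ({e1, e2} : Finset ι),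
      (if (fun _ => true) e then q else 1 - q) = q)]
    rw [Finset.prod_const, Finset.card_pair h12]
  have hYval : μ Y = ENNReal.ofReal (q ^ 2) := by
    rw [hY, hiid]
    congr 1
    rw [Finset.prod_congr rfl (fun e _ => by simp : ∀ e ∈ ({e3, e4} : Finset ι),
      (if (fun _ => true) e then q else 1 - q) = q)]
    rw [Finset.prod_const, Finset.card_pair h34]
  have hXY : X ∩ Y = {ω : ι → Bool | ∀ e ∈ ({e1, e2, e3, e4} : Finset ι), ω e = (fun _ => true) e} := by
    ext ω
    simp only [hX, hY, Set.mem_inter_iff, Set.mem_setOf_eq, Finset.mem_insert,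
      Finset.mem_singleton]
    constructor
    · rintro ⟨hx, hy⟩ e he
      rcases he with h | h | h | h
      · exact hx e (by simp [h])
      · exact hx e (by simp [h])
      · exact hy e (by simp [h])
      · exact hy e (by simp [h])
    · intro h
      exact ⟨fun e he => h e (by tauto), fun e he => h e (by tauto)⟩
  have hcard : ({e1, e2, e3, e4} : Finset ι).card = 4 := by
    rw [Finset.card_insert_of_notMem (by simp [h12, h13, h14]),
      Finset.card_insert_of_notMem (by simp [h23, h24]),
      Finset.card_insert_of_notMem (by simp [h34]), Finset.card_singleton]
  have hXYval : μ (X ∩ Y) = ENNReal.ofReal (q ^ 4) := by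
    rw [hXY, hiid]
    congr 1
    rw [Finset.prod_congr rfl (fun e _ => by simp : ∀ e ∈ ({e1, e2, e3, e4} : Finset ι),
      (if (fun _ => true) e then q else 1 - q) = q)]
    rw [Finset.prod_const, hcard]
  have hset : {ω : ι → Bool | (ω e1 = true ∧ ω e2 = true) ∨ (ω e3 = true ∧ ω e4 = true)}
      = X ∪ Y := by
    ext ω
    simp only [hX, hY, Set.mem_union, Set.mem_setOf_eq, Finset.mem_insert, Finset.mem_singleton]
    constructor
    · rintro (⟨ha, hb⟩ | ⟨ha, hb⟩)
      · left; rintro e (rfl | rfl) <;> assumption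
      · right; rintro e (rfl | rfl) <;> assumption
    · rintro (h | h)
      · exact Or.inl ⟨h e1 (Or.inl rfl), h e2 (Or.inr rfl)⟩
      · exact Or.inr ⟨h e3 (Or.inl rfl), h e4 (Or.inr rfl)⟩
  have hmY : MeasurableSet Y := cylinder_measurableSet _ _
  have hincl := measure_union_add_inter X hmY (μ := μ)
  rw [hset]
  have hfin : ENNReal.ofReal (q ^ 4) ≠ ⊤ := ENNReal.ofReal_ne_top
  have hq2le : q ^ 2 ≤ 1 := by nlinarith
  rw [← ENNReal.add_left_inj hfin]
  calc μ (X ∪ Y) + ENNReal.ofReal (q ^ 4)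
      = μ (X ∪ Y) + μ (X ∩ Y) := by rw [hXYval]
    _ = μ X + μ Y := hincl
    _ = ENNReal.ofReal (q ^ 2) + ENNReal.ofReal (q ^ 2) := by rw [hXval, hYval]
    _ = ENNReal.ofReal (2 * q ^ 2 - q ^ 4) + ENNReal.ofReal (q ^ 4) := by
        rw [← ENNReal.ofReal_add (by positivity) (by positivity),
          ← ENNReal.ofReal_add (by nlinarith [hq2le, sq_nonneg q]) (by positivity)]
        congr 1
        ring


/-- Lower bound for the event "some loop edge is open, or all chain edges are open". -/
lemma loop_or_chain_measure (μ : Measure (ι → Bool)) [IsProbabilityMeasure μ]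
    (q : ℝ) (h0 : 0 ≤ q) (h1 : q ≤ 1)
    (hiid : ∀ (s : Finset ι) (b : ι → Bool), μ {ω | ∀ e ∈ s, ω e = b e}
      = ENNReal.ofReal (∏ e ∈ s, if b e then q else 1 - q))
    (k : ℕ) (eL eC : ℕ → ι)
    (hinjL : Set.InjOn eL (Set.Iio k)) (hinjC : Set.InjOn eC (Set.Iio k))
    (hLC : ∀ j j', j < k → j' < k → eL j ≠ eC j') :
    ENNReal.ofReal (1 - (1 - q) ^ k * (1 - q ^ k))
      ≤ μ {ω : ι → Bool | (∃ j < k, ω (eL j) = true) ∨ (∀ j < k, ω (eC j) = true)} := by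
  classical
  set sL : Finset ι := (Finset.range k).image eL with hsL
  set sC : Finset ι := (Finset.range k).image eC with hsC
  have hcardL : sL.card = k := by
    rw [hsL, Finset.card_image_of_injOn (by
      intro x hx y hy
      exact hinjL (by simpa using hx) (by simpa using hy)), Finset.card_range]
  have hcardC : sC.card = k := by
    rw [hsC, Finset.card_image_of_injOn (by
      intro x hx y hy
      exact hinjC (by simpa using hx) (by simpa using hy)), Finset.card_range]
  have hdisjLC : Disjoint sL sC := by
    rw [Finset.disjoint_left]
    intro e heL heC
    rw [hsL, Finset.mem_image] at heL
    rw [hsC, Finset.mem_image] at heC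
    obtain ⟨j, hj, rfl⟩ := heL
    obtain ⟨j', hj', he⟩ := heC
    exact hLC j j' (by simpa using hj) (by simpa using hj') he.symm
  set b0 : ι → Bool := fun e => if e ∈ sC then true else false with hb0
  set C1 : Set (ι → Bool) := {ω | ∀ e ∈ sL, ω e = false} with hC1
  set C2 : Set (ι → Bool) := {ω | ∀ e ∈ sC, ω e = true} with hC2
  have hC1val : μ C1 = ENNReal.ofReal ((1 - q) ^ k) := by
    have : C1 = {ω : ι → Bool | ∀ e ∈ sL, ω e = (fun _ => false) e} := rfl
    rw [this, hiid]
    congr 1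
    rw [Finset.prod_congr rfl (fun e _ => by simp : ∀ e ∈ sL,
      (if (fun _ => false) e then q else 1 - q) = 1 - q)]
    rw [Finset.prod_const, hcardL]
  have hC12 : C1 ∩ C2 = {ω : ι → Bool | ∀ e ∈ sL ∪ sC, ω e = b0 e} := by
    ext ω
    simp only [hC1, hC2, Set.mem_inter_iff, Set.mem_setOf_eq, Finset.mem_union]
    constructor
    · rintro ⟨hx, hy⟩ e he
      rcases he with h | h
      · rw [hx e h, hb0]
        simp [Finset.disjoint_left.1 hdisjLC h]
      · rw [hy e h, hb0]
        simp [h]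
    · intro h
      constructor
      · intro e he
        have := h e (Or.inl he)
        simpa [hb0, Finset.disjoint_left.1 hdisjLC he] using this
      · intro e he
        have := h e (Or.inr he)
        simpa [hb0, he] using this
  have hC12val : μ (C1 ∩ C2) = ENNReal.ofReal ((1 - q) ^ k * q ^ k) := by
    rw [hC12, hiid]
    congr 1
    rw [Finset.prod_union hdisjLC]
    have hL : ∏ e ∈ sL, (if b0 e then q else 1 - q) = (1 - q) ^ k := by
      rw [Finset.prod_congr rfl (fun e he => by
        rw [hb0]
        simp [Finset.disjoint_left.1 hdisjLC he] : ∀ e ∈ sL, (if b0 e then q else 1 - q) = 1 - q)]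
      rw [Finset.prod_const, hcardL]
    have hC : ∏ e ∈ sC, (if b0 e then q else 1 - q) = q ^ k := by
      rw [Finset.prod_congr rfl (fun e he => by
        rw [hb0]; simp [he] : ∀ e ∈ sC, (if b0 e then q else 1 - q) = q)]
      rw [Finset.prod_const, hcardC]
    rw [hL, hC]
  set D : Set (ι → Bool) :=
    {ω : ι → Bool | (∃ j < k, ω (eL j) = true) ∨ (∀ j < k, ω (eC j) = true)} with hD
  have hDc : Dᶜ = C1 \ C2 := by
    ext ω
    simp only [hD, hC1, hC2, Set.mem_compl_iff, Set.mem_setOf_eq, Set.mem_diff]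
    constructor
    · intro h
      push_neg at h
      obtain ⟨h1', h2'⟩ := h
      constructor
      · intro e he
        rw [hsL, Finset.mem_image] at he
        obtain ⟨j, hj, rfl⟩ := he
        have := h1' j (by simpa using hj)
        simpa using this
      · intro hall
        obtain ⟨j, hj, hne⟩ := h2'
        exact hne (hall (eC j) (by
          rw [hsC, Finset.mem_image]
          exact ⟨j, by simpa using hj, rfl⟩))
    · rintro ⟨hc1, hc2⟩
      push_neg
      constructor
      · intro j hj
        have := hc1 (eL j) (by
          rw [hsL, Finset.mem_image]
          exact ⟨j, by simpa using hj, rfl⟩)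
        simp [this]
      · by_contra hall
        push_neg at hall
        exact hc2 (fun e he => by
          rw [hsC, Finset.mem_image] at he
          obtain ⟨j, hj, rfl⟩ := he
          exact hall j (by simpa using hj))
  have hmC1 : MeasurableSet C1 := cylinder_measurableSet sL (fun _ => false)
  have hmC2 : MeasurableSet C2 := cylinder_measurableSet sC (fun _ => true)
  have hmDc : MeasurableSet Dᶜ := by rw [hDc]; exact hmC1.diff hmC2
  have hDcval : μ Dᶜ = ENNReal.ofReal ((1 - q) ^ k * (1 - q ^ k)) := by
    have hsub : C1 ∩ C2 ⊆ C1 := Set.inter_subset_left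
    have hdiff : C1 \ C2 = C1 \ (C1 ∩ C2) := by
      ext ω; simp only [Set.mem_diff, Set.mem_inter_iff]; tauto
    rw [hDc, hdiff, measure_diff hsub (hmC1.inter hmC2).nullMeasurableSet
      (by rw [hC12val]; exact ENNReal.ofReal_ne_top)]
    rw [hC1val, hC12val, ← ENNReal.ofReal_sub _
      (mul_nonneg (pow_nonneg (by linarith : (0:ℝ) ≤ 1 - q) k) (pow_nonneg h0 k))]
    congr 1
    ring
  have huv0 : 0 ≤ (1 - q) ^ k * (1 - q ^ k) := by
    have : q ^ k ≤ 1 := pow_le_one₀ h0 h1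
    have h2 : (0:ℝ) ≤ (1 - q) ^ k := pow_nonneg (by linarith) k
    nlinarith
  have hD1 : μ D = 1 - μ Dᶜ := by
    have := prob_compl_eq_one_sub (μ := μ) hmDc
    rw [compl_compl] at this
    exact this
  rw [hD1, hDcval]
  rw [← ENNReal.ofReal_one, ← ENNReal.ofReal_sub _ huv0]


lemma chain_pow_ineq (q γ : ℝ) (h0 : 0 ≤ q) (h1 : q ≤ 1) (hγ0 : 0 ≤ γ)
    (hγle : γ ≤ 1 - (1 - q) ^ 2) (k : ℕ) :
    γ ^ k ≤ 1 - (1 - q) ^ k * (1 - q ^ k) := by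
  set u : ℝ := 1 - q with hu
  have hu0 : 0 ≤ u := by simp [hu]; linarith
  have hu1 : u ≤ 1 := by simp [hu]; linarith
  have huu : 0 ≤ 1 - u ^ 2 := by nlinarith
  have h2 : γ ^ k ≤ (1 - u ^ 2) ^ k := by
    apply pow_le_pow_left₀ hγ0
    nlinarith [hγle]
  have hg1 := geom_sum₂_mul (1 - u ^ 2) (u * q) k
  have hg2 := geom_sum₂_mul (1 : ℝ) u k
  have hdq : (1 - u ^ 2) - u * q = q := by rw [hu]; ring
  have h1u : (1 : ℝ) - u = q := by rw [hu]; ring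
  have hsum : (∑ i ∈ Finset.range k, (1 - u ^ 2) ^ i * (u * q) ^ (k - 1 - i))
      ≤ ∑ i ∈ Finset.range k, (1 : ℝ) ^ i * u ^ (k - 1 - i) := by
    refine Finset.sum_le_sum fun i _ => ?_
    rw [one_pow, one_mul, mul_pow]
    calc (1 - u ^ 2) ^ i * (u ^ (k - 1 - i) * q ^ (k - 1 - i))
        = ((1 - u ^ 2) ^ i * q ^ (k - 1 - i)) * u ^ (k - 1 - i) := by ring
      _ ≤ 1 * u ^ (k - 1 - i) := by
          refine mul_le_mul_of_nonneg_right ?_ (pow_nonneg hu0 _)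
          have ha : (1 - u ^ 2) ^ i ≤ 1 := pow_le_one₀ huu (by nlinarith)
          have hb : q ^ (k - 1 - i) ≤ 1 := pow_le_one₀ h0 h1
          have hc : (0:ℝ) ≤ (1 - u ^ 2) ^ i := pow_nonneg huu i
          have hd : (0:ℝ) ≤ q ^ (k - 1 - i) := pow_nonneg h0 _
          nlinarith
      _ = u ^ (k - 1 - i) := one_mul _
  have hmain : (1 - u ^ 2) ^ k - (u * q) ^ k ≤ 1 - u ^ k := by
    rw [hdq] at hg1
    rw [h1u, one_pow] at hg2
    rw [← hg1, ← hg2]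
    exact mul_le_mul_of_nonneg_right hsum h0
  have hup : (u * q) ^ k = u ^ k * q ^ k := mul_pow u q k
  calc γ ^ k ≤ (1 - u ^ 2) ^ k := h2
    _ ≤ 1 - u ^ k + (u * q) ^ k := by linarith
    _ = 1 - u ^ k * (1 - q ^ k) := by rw [hup]; ring


lemma bool_le_true {x y : Bool} (h : x ≤ y) (hx : x = true) : y = true := by
  subst hx; exact le_antisymm (Bool.le_true _) h

end
end SkewAux

/-- Let `q` exceed the critical probability for oriented percolation on ℤ², and
suppose the diagonal connection probabilities are bounded below by `γ > 0`. For
linearly independent `a, b` and `ℓ` the least positive integer with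
`(ℓ,ℓ) = (0,0)` in the skew torus `T(a,b)`, percolation with parameter `q` on the
skew torus contains an open oriented cycle with probability at least `γ^ℓ`. -/

theorem skew_torus_open_cycle (q γ : ℝ) (hq : pcOriented < q) (hq1 : q ≤ 1)
    (μZ : Measure EdgeConf) [IsProbabilityMeasure μZ] (hZ : IIDEdges μZ q)
    (hγpos : 0 < γ)
    (hγ : ∀ r : ℕ, 1 ≤ r →
      ENNReal.ofReal γ ≤ μZ {ω | OpenPathTo ω (0, 0) ((r : ℤ), (r : ℤ))})
    (a b : ℤ × ℤ) (hab : LinearIndependent ℤ ![a, b])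
    (H : AddSubgroup (ℤ × ℤ)) (hH : H = AddSubgroup.closure {a, b})
    (ℓ : ℕ) (hℓpos : 0 < ℓ) (hℓmem : ((ℓ : ℤ), (ℓ : ℤ)) ∈ H)
    (hℓmin : ∀ m : ℕ, 0 < m → ((m : ℤ), (m : ℤ)) ∈ H → ℓ ≤ m)
    (μT : Measure (TorusEdge H → Bool)) [IsProbabilityMeasure μT]
    (hT : IIDTorusEdges H μT q) :
    ENNReal.ofReal (γ ^ ℓ) ≤ μT {ω | OpenOrientedCycle H ω} := by

  classical
  -- basic bounds on q and γ
  have hq0 : 0 ≤ q := by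
    have h := hT {(QuotientAddGroup.mk (s := H) ((0:ℤ),(0:ℤ)), true)} (fun _ => false)
    have hle : μT {ω | ∀ e ∈ ({(QuotientAddGroup.mk (s := H) ((0:ℤ),(0:ℤ)), true)} :
        Finset (TorusEdge H)), ω e = (fun _ => false) e} ≤ 1 := prob_le_one
    rw [h, Finset.prod_singleton] at hle
    have h1q : (1 : ℝ) - q ≤ 1 := ENNReal.ofReal_le_one.mp (by simpa using hle)
    linarith
  have hmkeq : ∀ x y : ℤ × ℤ,
      (QuotientAddGroup.mk (s := H) x = QuotientAddGroup.mk (s := H) y) ↔ x - y ∈ H :=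
    fun x y => QuotientAddGroup.eq_iff_sub_mem
  -- γ ≤ 2q² - q⁴
  have hZunion : μZ {ω : EdgeConf |
        (ω (((0:ℤ),(0:ℤ)), true) = true ∧ ω (((1:ℤ),(0:ℤ)), false) = true) ∨
        (ω (((0:ℤ),(0:ℤ)), false) = true ∧ ω (((0:ℤ),(1:ℤ)), true) = true)}
      = ENNReal.ofReal (2 * q ^ 2 - q ^ 4) := by
    refine SkewAux.union_pair_measure μZ q hZ hq0 hq1 _ _ _ _ ?_ ?_ ?_ ?_ ?_ ?_ <;>
      simp [Prod.ext_iff]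
  have hpath_sub : {ω : EdgeConf | OpenPathTo ω (0, 0) ((1:ℤ), (1:ℤ))} ⊆
      {ω : EdgeConf |
        (ω (((0:ℤ),(0:ℤ)), true) = true ∧ ω (((1:ℤ),(0:ℤ)), false) = true) ∨
        (ω (((0:ℤ),(0:ℤ)), false) = true ∧ ω (((0:ℤ),(1:ℤ)), true) = true)} := by
    intro ω hω
    obtain ⟨n, f, h0f, hnf, hstep⟩ := hω
    have hsum : ∀ m, m ≤ n → (f m).1 + (f m).2 = (m : ℤ) := by
      intro m
      induction m with
      | zero => intro _; rw [h0f]; simp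
      | succ m ih =>
        intro hm
        obtain ⟨d, _, hfm⟩ := hstep m (by omega)
        have hih := ih (by omega)
        rw [hfm]
        cases d <;> simp [dirVec, Prod.fst_add, Prod.snd_add] <;> push_cast <;> omega
    have hn2 : n = 2 := by
      have h2 := hsum n le_rfl
      rw [hnf] at h2
      simp at h2
      omega
    obtain ⟨d0, hd0, hf1⟩ := hstep 0 (by omega)
    obtain ⟨d1, hd1, hf2⟩ := hstep 1 (by omega)
    rw [h0f] at hd0 hf1
    rw [hn2] at hnf
    cases d0 with
    | true =>
      have hf1' : f 1 = ((1:ℤ), (0:ℤ)) := by rw [hf1]; simp [dirVec]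
      rw [hf1'] at hd1 hf2
      rw [hnf] at hf2
      cases d1 with
      | true => simp [dirVec, Prod.ext_iff] at hf2
      | false => exact Or.inl ⟨hd0, hd1⟩
    | false =>
      have hf1' : f 1 = ((0:ℤ), (1:ℤ)) := by rw [hf1]; simp [dirVec]
      rw [hf1'] at hd1 hf2
      rw [hnf] at hf2
      cases d1 with
      | false => simp [dirVec, Prod.ext_iff] at hf2
      | true => exact Or.inr ⟨hd0, hd1⟩
  have hq2le1 : q ^ 2 ≤ 1 := by nlinarith
  have h2q24 : (0:ℝ) ≤ 2 * q ^ 2 - q ^ 4 := by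
    nlinarith [mul_le_mul_of_nonneg_left hq2le1 (sq_nonneg q)]
  have hγc : γ ≤ 2 * q ^ 2 - q ^ 4 := by
    have h := hγ 1 le_rfl
    simp only [Nat.cast_one] at h
    have h2 : μZ {ω | OpenPathTo ω (0, 0) ((1:ℤ), (1:ℤ))} ≤ ENNReal.ofReal (2 * q ^ 2 - q ^ 4) := by
      rw [← hZunion]; exact measure_mono hpath_sub
    exact (ENNReal.ofReal_le_ofReal_iff h2q24).1 (le_trans h h2)
  have hγc1 : γ ≤ 1 - (1 - q) ^ 2 := by
    nlinarith [mul_nonneg (mul_nonneg hq0 (sq_nonneg (1 - q))) (by linarith : (0:ℝ) ≤ q + 2)]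
  by_cases h10 : ((1:ℤ), (0:ℤ)) ∈ H
  · -- Case: (1,0) ∈ H.  East edges are loops; go North around a cycle of length ℓ.
    have h0ℓ : ((0:ℤ), (ℓ:ℤ)) ∈ H := by
      have hz : (ℓ:ℤ) • ((1:ℤ), (0:ℤ)) ∈ H := AddSubgroup.zsmul_mem H h10 _
      have hsub := AddSubgroup.sub_mem H hℓmem hz
      have he : ((ℓ:ℤ), (ℓ:ℤ)) - (ℓ:ℤ) • ((1:ℤ), (0:ℤ)) = ((0:ℤ), (ℓ:ℤ)) := by
        simp [Prod.ext_iff, Prod.smul_mk, smul_eq_mul]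
      rwa [he] at hsub
    have hnm : ∀ m : ℕ, 0 < m → m < ℓ → ((0:ℤ), (m:ℤ)) ∉ H := by
      intro m hm hmℓ hmem
      have hz : (m:ℤ) • ((1:ℤ), (0:ℤ)) ∈ H := AddSubgroup.zsmul_mem H h10 _
      have hadd := AddSubgroup.add_mem H hz hmem
      have he : (m:ℤ) • ((1:ℤ), (0:ℤ)) + ((0:ℤ), (m:ℤ)) = ((m:ℤ), (m:ℤ)) := by
        simp [Prod.ext_iff, Prod.smul_mk, smul_eq_mul]
      rw [he] at hadd
      exact absurd (hℓmin m hm hadd) (by omega)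
    set v : ℕ → (ℤ × ℤ) ⧸ H := fun j => QuotientAddGroup.mk (s := H) ((0:ℤ), (j:ℤ)) with hv
    have hvinj : ∀ j j', j < ℓ → j' < ℓ → v j = v j' → j = j' := by
      intro j j' hj hj' he
      by_contra hne
      rw [hv] at he
      simp only [hmkeq] at he
      rcases Nat.lt_or_ge j j' with hlt | hge
      · have hneg := AddSubgroup.neg_mem H he
        have he2 : -(((0:ℤ), (j:ℤ)) - ((0:ℤ), (j':ℤ))) = ((0:ℤ), ((j' - j : ℕ) : ℤ)) := by
          have : ((j' - j : ℕ) : ℤ) = (j' : ℤ) - (j : ℤ) := by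
            push_cast [Nat.cast_sub hlt.le]; ring
          simp [Prod.ext_iff, this]
        rw [he2] at hneg
        exact hnm (j' - j) (by omega) (by omega) hneg
      · have hlt' : j' < j := by omega
        have he2 : ((0:ℤ), (j:ℤ)) - ((0:ℤ), (j':ℤ)) = ((0:ℤ), ((j - j' : ℕ) : ℤ)) := by
          have : ((j - j' : ℕ) : ℤ) = (j : ℤ) - (j' : ℤ) := by
            push_cast [Nat.cast_sub hlt'.le]; ring
          simp [Prod.ext_iff, this]
        rw [he2] at he
        exact hnm (j - j') (by omega) (by omega) he
    have hbound := SkewAux.loop_or_chain_measure μT q hq0 hq1 hT ℓ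
      (fun j => (v j, true)) (fun j => (v j, false))
      (by
        intro j hj j' hj' h
        exact hvinj j j' hj hj' (by simpa [Prod.ext_iff] using h))
      (by
        intro j hj j' hj' h
        exact hvinj j j' hj hj' (by simpa [Prod.ext_iff] using h))
      (by intro j j' _ _; simp)
    have hsub : {ω : TorusEdge H → Bool |
        (∃ j < ℓ, ω (v j, true) = true) ∨ (∀ j < ℓ, ω (v j, false) = true)}
        ⊆ {ω | OpenOrientedCycle H ω} := by
      intro ω hω
      rcases hω with ⟨j, hj, hopen⟩ | hall
      · refine ⟨1, fun m => ((m:ℤ), (j:ℤ)), one_pos, ?_, ?_⟩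
        · rw [hmkeq]
          have he : (((1:ℕ):ℤ), (j:ℤ)) - (((0:ℕ):ℤ), (j:ℤ)) = ((1:ℤ), (0:ℤ)) := by
            simp [Prod.ext_iff]
          rw [he]
          exact h10
        · intro m hm
          have hm0 : m = 0 := by omega
          subst hm0
          refine ⟨true, ?_, ?_⟩
          · have he : QuotientAddGroup.mk (s := H) ((((0:ℕ)):ℤ), (j:ℤ)) = v j := by
              rw [hv]; norm_num
            rw [he]
            exact hopen
          · simp [dirVec, Prod.ext_iff]
      · refine ⟨ℓ, fun m => ((0:ℤ), (m:ℤ)), hℓpos, ?_, ?_⟩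
        · rw [hmkeq]
          have he : ((0:ℤ), ((ℓ:ℕ):ℤ)) - ((0:ℤ), (((0:ℕ)):ℤ)) = ((0:ℤ), (ℓ:ℤ)) := by
            simp [Prod.ext_iff]
          rw [he]
          exact h0ℓ
        · intro m hm
          refine ⟨false, ?_, ?_⟩
          · exact hall m hm
          · simp [dirVec, Prod.ext_iff]
    calc ENNReal.ofReal (γ ^ ℓ)
        ≤ ENNReal.ofReal (1 - (1 - q) ^ ℓ * (1 - q ^ ℓ)) :=
          ENNReal.ofReal_le_ofReal (SkewAux.chain_pow_ineq q γ hq0 hq1 hγpos.le hγc1 ℓ)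
      _ ≤ μT {ω : TorusEdge H → Bool |
            (∃ j < ℓ, ω (v j, true) = true) ∨ (∀ j < ℓ, ω (v j, false) = true)} := hbound
      _ ≤ μT {ω | OpenOrientedCycle H ω} := measure_mono hsub
  by_cases h01 : ((0:ℤ), (1:ℤ)) ∈ H
  · -- Case: (0,1) ∈ H.  North edges are loops; go East around a cycle of length ℓ.
    have h0ℓ : ((ℓ:ℤ), (0:ℤ)) ∈ H := by
      have hz : (ℓ:ℤ) • ((0:ℤ), (1:ℤ)) ∈ H := AddSubgroup.zsmul_mem H h01 _
      have hsub := AddSubgroup.sub_mem H hℓmem hz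
      have he : ((ℓ:ℤ), (ℓ:ℤ)) - (ℓ:ℤ) • ((0:ℤ), (1:ℤ)) = ((ℓ:ℤ), (0:ℤ)) := by
        simp [Prod.ext_iff, Prod.smul_mk, smul_eq_mul]
      rwa [he] at hsub
    have hnm : ∀ m : ℕ, 0 < m → m < ℓ → ((m:ℤ), (0:ℤ)) ∉ H := by
      intro m hm hmℓ hmem
      have hz : (m:ℤ) • ((0:ℤ), (1:ℤ)) ∈ H := AddSubgroup.zsmul_mem H h01 _
      have hadd := AddSubgroup.add_mem H hz hmem
      have he : (m:ℤ) • ((0:ℤ), (1:ℤ)) + ((m:ℤ), (0:ℤ)) = ((m:ℤ), (m:ℤ)) := by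
        simp [Prod.ext_iff, Prod.smul_mk, smul_eq_mul]
      rw [he] at hadd
      exact absurd (hℓmin m hm hadd) (by omega)
    set v : ℕ → (ℤ × ℤ) ⧸ H := fun j => QuotientAddGroup.mk (s := H) ((j:ℤ), (0:ℤ)) with hv
    have hvinj : ∀ j j', j < ℓ → j' < ℓ → v j = v j' → j = j' := by
      intro j j' hj hj' he
      by_contra hne
      rw [hv] at he
      simp only [hmkeq] at he
      rcases Nat.lt_or_ge j j' with hlt | hge
      · have hneg := AddSubgroup.neg_mem H he
        have he2 : -(((j:ℤ), (0:ℤ)) - ((j':ℤ), (0:ℤ))) = (((j' - j : ℕ) : ℤ), (0:ℤ)) := by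
          have : ((j' - j : ℕ) : ℤ) = (j' : ℤ) - (j : ℤ) := by
            push_cast [Nat.cast_sub hlt.le]; ring
          simp [Prod.ext_iff, this]
        rw [he2] at hneg
        exact hnm (j' - j) (by omega) (by omega) hneg
      · have hlt' : j' < j := by omega
        have he2 : ((j:ℤ), (0:ℤ)) - ((j':ℤ), (0:ℤ)) = (((j - j' : ℕ) : ℤ), (0:ℤ)) := by
          have : ((j - j' : ℕ) : ℤ) = (j : ℤ) - (j' : ℤ) := by
            push_cast [Nat.cast_sub hlt'.le]; ring
          simp [Prod.ext_iff, this]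
        rw [he2] at he
        exact hnm (j - j') (by omega) (by omega) he
    have hbound := SkewAux.loop_or_chain_measure μT q hq0 hq1 hT ℓ
      (fun j => (v j, false)) (fun j => (v j, true))
      (by
        intro j hj j' hj' h
        exact hvinj j j' hj hj' (by simpa [Prod.ext_iff] using h))
      (by
        intro j hj j' hj' h
        exact hvinj j j' hj hj' (by simpa [Prod.ext_iff] using h))
      (by intro j j' _ _; simp)
    have hsub : {ω : TorusEdge H → Bool |
        (∃ j < ℓ, ω (v j, false) = true) ∨ (∀ j < ℓ, ω (v j, true) = true)}
        ⊆ {ω | OpenOrientedCycle H ω} := by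
      intro ω hω
      rcases hω with ⟨j, hj, hopen⟩ | hall
      · refine ⟨1, fun m => ((j:ℤ), (m:ℤ)), one_pos, ?_, ?_⟩
        · rw [hmkeq]
          have he : ((j:ℤ), (((1:ℕ)):ℤ)) - ((j:ℤ), (((0:ℕ)):ℤ)) = ((0:ℤ), (1:ℤ)) := by
            simp [Prod.ext_iff]
          rw [he]
          exact h01
        · intro m hm
          have hm0 : m = 0 := by omega
          subst hm0
          refine ⟨false, ?_, ?_⟩
          · have he : QuotientAddGroup.mk (s := H) ((j:ℤ), (((0:ℕ)):ℤ)) = v j := by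
              rw [hv]; norm_num
            rw [he]
            exact hopen
          · simp [dirVec, Prod.ext_iff]
      · refine ⟨ℓ, fun m => ((m:ℤ), (0:ℤ)), hℓpos, ?_, ?_⟩
        · rw [hmkeq]
          have he : (((ℓ:ℕ):ℤ), (0:ℤ)) - ((((0:ℕ)):ℤ), (0:ℤ)) = ((ℓ:ℤ), (0:ℤ)) := by
            simp [Prod.ext_iff]
          rw [he]
          exact h0ℓ
        · intro m hm
          refine ⟨true, ?_, ?_⟩
          · exact hall m hm
          · simp [dirVec, Prod.ext_iff]
    calc ENNReal.ofReal (γ ^ ℓ)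
        ≤ ENNReal.ofReal (1 - (1 - q) ^ ℓ * (1 - q ^ ℓ)) :=
          ENNReal.ofReal_le_ofReal (SkewAux.chain_pow_ineq q γ hq0 hq1 hγpos.le hγc1 ℓ)
      _ ≤ μT {ω : TorusEdge H → Bool |
            (∃ j < ℓ, ω (v j, false) = true) ∨ (∀ j < ℓ, ω (v j, true) = true)} := hbound
      _ ≤ μT {ω | OpenOrientedCycle H ω} := measure_mono hsub
  · -- Main case: (1,0) ∉ H and (0,1) ∉ H.  FKG along the diagonal.
    set mkH : ℤ × ℤ → (ℤ × ℤ) ⧸ H := fun z => QuotientAddGroup.mk (s := H) z with hmkH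
    set E1 : ℕ → TorusEdge H := fun i => (mkH ((i:ℤ), (i:ℤ)), true) with hE1
    set E2 : ℕ → TorusEdge H := fun i => (mkH ((i:ℤ) + 1, (i:ℤ)), false) with hE2
    set E3 : ℕ → TorusEdge H := fun i => (mkH ((i:ℤ), (i:ℤ)), false) with hE3
    set E4 : ℕ → TorusEdge H := fun i => (mkH ((i:ℤ), (i:ℤ) + 1), true) with hE4
    set A : ℕ → Set (TorusEdge H → Bool) := fun i =>
      {ω | (ω (E1 i) = true ∧ ω (E2 i) = true) ∨ (ω (E3 i) = true ∧ ω (E4 i) = true)} with hA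
    have hne14 : ∀ i : ℕ, mkH ((i:ℤ), (i:ℤ)) ≠ mkH ((i:ℤ), (i:ℤ) + 1) := by
      intro i he
      rw [hmkH] at he
      rw [hmkeq] at he
      have he2 : ((i:ℤ), (i:ℤ)) - ((i:ℤ), (i:ℤ) + 1) = -((0:ℤ), (1:ℤ)) := by
        simp [Prod.ext_iff]
      rw [he2] at he
      exact h01 (by simpa using AddSubgroup.neg_mem H he)
    have hne23 : ∀ i : ℕ, mkH ((i:ℤ) + 1, (i:ℤ)) ≠ mkH ((i:ℤ), (i:ℤ)) := by
      intro i he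
      rw [hmkH] at he
      rw [hmkeq] at he
      have he2 : ((i:ℤ) + 1, (i:ℤ)) - ((i:ℤ), (i:ℤ)) = ((1:ℤ), (0:ℤ)) := by
        simp [Prod.ext_iff]
      rw [he2] at he
      exact h10 he
    have hAval : ∀ i : ℕ, μT (A i) = ENNReal.ofReal (2 * q ^ 2 - q ^ 4) := by
      intro i
      rw [hA]
      refine SkewAux.union_pair_measure μT q hT hq0 hq1 (E1 i) (E2 i) (E3 i) (E4 i)
        ?_ ?_ ?_ ?_ ?_ ?_
      · simp [hE1, hE2, Prod.ext_iff]
      · simp [hE1, hE3, Prod.ext_iff]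
      · simp only [hE1, hE4, Ne, Prod.mk.injEq, not_and]
        intro he _
        exact hne14 i he
      · simp only [hE2, hE3, Ne, Prod.mk.injEq, not_and]
        intro he _
        exact hne23 i he
      · simp [hE2, hE4, Prod.ext_iff]
      · simp [hE3, hE4, Prod.ext_iff]
    have hHar := SkewAux.harris_meas μT q hq0 hq1 hT (Finset.range ℓ) A
      (fun i => {E1 i, E2 i, E3 i, E4 i})
      (by
        intro i _ ω ω' hag hω
        rw [hA] at hω ⊢
        have h1 := hag (E1 i) (by simp)
        have h2 := hag (E2 i) (by simp)
        have h3 := hag (E3 i) (by simp)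
        have h4 := hag (E4 i) (by simp)
        rcases hω with hl | hr
        · exact Or.inl ⟨h1 ▸ hl.1, h2 ▸ hl.2⟩
        · exact Or.inr ⟨h3 ▸ hr.1, h4 ▸ hr.2⟩)
      (by
        intro i _ ω ω' hle hω
        rw [hA] at hω ⊢
        rcases hω with hl | hr
        · exact Or.inl ⟨SkewAux.bool_le_true (hle _) hl.1, SkewAux.bool_le_true (hle _) hl.2⟩
        · exact Or.inr ⟨SkewAux.bool_le_true (hle _) hr.1, SkewAux.bool_le_true (hle _) hr.2⟩)
    have hprod : ∏ i ∈ Finset.range ℓ, μT (A i) = ENNReal.ofReal ((2 * q ^ 2 - q ^ 4) ^ ℓ) := by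
      rw [Finset.prod_congr rfl (fun i _ => hAval i), Finset.prod_const, Finset.card_range,
        ← ENNReal.ofReal_pow h2q24]
    have hsub : (⋂ i ∈ Finset.range ℓ, A i) ⊆ {ω | OpenOrientedCycle H ω} := by
      intro ω hω
      rw [Set.mem_iInter₂] at hω
      have hA' : ∀ i, i < ℓ →
          (ω (E1 i) = true ∧ ω (E2 i) = true) ∨ (ω (E3 i) = true ∧ ω (E4 i) = true) := by
        intro i hi
        have h := hω i (Finset.mem_range.mpr hi)
        rwa [hA] at h
      set vch : ℕ → Bool := fun i => ω (E1 i) && ω (E2 i) with hvch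
      have hvtrue : ∀ i, i < ℓ → vch i = true → ω (E1 i) = true ∧ ω (E2 i) = true := by
        intro i _ h
        rw [hvch] at h
        simpa [Bool.and_eq_true] using h
      have hvfalse : ∀ i, i < ℓ → vch i = false → ω (E3 i) = true ∧ ω (E4 i) = true := by
        intro i hi h
        rcases hA' i hi with hl | hr
        · exfalso
          rw [hvch] at h
          simp [hl.1, hl.2] at h
        · exact hr
      set dir : ℕ → Bool := fun m => if m % 2 = 0 then vch (m / 2) else !(vch (m / 2)) with hdir
      set g : ℕ → ℤ × ℤ := fun m =>
        Nat.rec ((0:ℤ), (0:ℤ)) (fun k p => p + dirVec (dir k)) m with hgdef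
      have hgs : ∀ m, g (m + 1) = g m + dirVec (dir m) := fun m => rfl
      have hdeven : ∀ i : ℕ, dir (2 * i) = vch i := by
        intro i
        rw [hdir]
        simp [(by omega : (2 * i) % 2 = 0), (by omega : (2 * i) / 2 = i)]
      have hdodd : ∀ i : ℕ, dir (2 * i + 1) = !(vch i) := by
        intro i
        rw [hdir]
        simp only [(by omega : (2 * i + 1) / 2 = i)]
        rw [if_neg (by omega)]
      have hkey : ∀ i, g (2 * i) = ((i:ℤ), (i:ℤ)) := by
        intro i
        induction i with
        | zero => simp [hgdef]
        | succ i ih =>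
          have h21 : 2 * (i + 1) = (2 * i + 1) + 1 := by ring
          rw [h21, hgs (2 * i + 1), hgs (2 * i), ih, hdeven, hdodd]
          cases vch i <;>
            · simp only [dirVec, Bool.not_true, Bool.not_false, if_true, if_false,
                Prod.mk_add_mk, Prod.ext_iff, Prod.fst_add, Prod.snd_add]
              push_cast
              omega
      refine ⟨2 * ℓ, g, by omega, ?_, ?_⟩
      · have h2l := hkey ℓ
        have hg0 : g 0 = ((0:ℤ), (0:ℤ)) := rfl
        rw [h2l, hg0, hmkeq]
        simpa using hℓmem
      · intro m hm
        refine ⟨dir m, ?_, hgs m⟩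
        by_cases hpar : m % 2 = 0
        · obtain ⟨i, rfl⟩ : ∃ i, m = 2 * i := ⟨m / 2, by omega⟩
          have hiℓ : i < ℓ := by omega
          rw [hkey i, hdeven i]
          cases hvi : vch i with
          | true =>
            have h := (hvtrue i hiℓ hvi).1
            simp only [hE1, hmkH] at h
            exact h
          | false =>
            have h := (hvfalse i hiℓ hvi).1
            simp only [hE3, hmkH] at h
            exact h
        · obtain ⟨i, rfl⟩ : ∃ i, m = 2 * i + 1 := ⟨m / 2, by omega⟩
          have hiℓ : i < ℓ := by omega
          have hgm : g (2 * i + 1) = ((i:ℤ), (i:ℤ)) + dirVec (vch i) := by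
            rw [hgs, hkey i, hdeven i]
          rw [hgm, hdodd i]
          cases hvi : vch i with
          | true =>
            have h := (hvtrue i hiℓ hvi).2
            simp only [hE2, hmkH] at h
            simpa [dirVec, Prod.mk_add_mk] using h
          | false =>
            have h := (hvfalse i hiℓ hvi).2
            simp only [hE4, hmkH] at h
            simpa [dirVec, Prod.mk_add_mk] using h
    calc ENNReal.ofReal (γ ^ ℓ)
        ≤ ENNReal.ofReal ((2 * q ^ 2 - q ^ 4) ^ ℓ) :=
          ENNReal.ofReal_le_ofReal (pow_le_pow_left₀ hγpos.le hγc ℓ)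
      _ = ∏ i ∈ Finset.range ℓ, μT (A i) := hprod.symm
      _ ≤ μT (⋂ i ∈ Finset.range ℓ, A i) := hHar
      _ ≤ μT {ω | OpenOrientedCycle H ω} := measure_mono hsub
end
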